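/- arXiv:1811.03248 — 8 statements merged into one kernel-verified Lean document; each statement's English description precedes it below -/
import Mathlib

section
/- Let m ≥ 3. Let Φ be the set of algebra automorphisms of ℂ⟨x,y⟩ of the form x ↦ x, y ↦ y + p(x) with p a ℂ-linear combination of the powers x^{km−1} (k ≥ 1), and let Ψ be the set of automorphisms of the form x ↦ x + q(y), y ↦ y with q a ℂ-linear combination of the powers y^{km−1} (k ≥ 1). Then no nonempty alternating product of non-identity elements of Φ and Ψ equals the identity: if σ₁, σ₂, …, σ_r (r ≥ 1) are automorphisms, each σ_t lying in Φ∖{id} or Ψ∖{id}, with consecutive σ_t, σ_{t+1} never both in Φ or both in Ψ, then σ₁ ∘ σ₂ ∘ ⋯ ∘ σ_r ≠ id. Equivalently, the subgroup G_m of Aut(ℂ⟨x,y⟩) generated by Φ and Ψ is isomorphic to the free product Φ ∗ Ψ. -/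
noncomputable section

namespace FreeAlgAut

/-- The free associative `ℂ`-algebra `R = ℂ⟨x,y⟩` on two generators. -/
abbrev R : Type := FreeAlgebra ℂ (Fin 2)

/-- The generator `x`. -/
def x : R := FreeAlgebra.ι ℂ 0

/-- The generator `y`. -/
def y : R := FreeAlgebra.ι ℂ 1

/-- Membership in `Φ`: endomorphisms `x ↦ x`, `y ↦ y + p(x)` with `p` a `ℂ`-linear
combination of the powers `x^{km−1}`, `k ≥ 1`. -/
def InPhi (m : ℕ) (f : R →ₐ[ℂ] R) : Prop :=
  ∃ p : R, p ∈ Submodule.span ℂ {q : R | ∃ k : ℕ, 1 ≤ k ∧ q = x ^ (k * m - 1)} ∧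
    f = FreeAlgebra.lift ℂ ![x, y + p]

/-- Membership in `Ψ`: endomorphisms `x ↦ x + q(y)`, `y ↦ y` with `q` a `ℂ`-linear
combination of the powers `y^{km−1}`, `k ≥ 1`. -/
def InPsi (m : ℕ) (f : R →ₐ[ℂ] R) : Prop :=
  ∃ q : R, q ∈ Submodule.span ℂ {r : R | ∃ k : ℕ, 1 ≤ k ∧ r = y ^ (k * m - 1)} ∧
    f = FreeAlgebra.lift ℂ ![x + q, y]

/-! Evaluating at points of `ℂ²`, a non-identity element of `Φ` acts as `(a, b) ↦ (a, b + P(a))`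
with `P ≠ 0` divisible by `X²` (this is where `m ≥ 3` enters), so `‖P(a)‖ ≥ 2‖a‖` once `‖a‖` is
large; elements of `Ψ` act symmetrically. Far out, `Φ` therefore moves the region `‖b‖ < ‖a‖` into
`‖a‖ < ‖b‖` and `Ψ` moves it back, each time strictly increasing `max ‖a‖ ‖b‖`, so an alternating
word moves some point of `ℂ²` and is not the identity. -/

open Polynomial Filter

lemma algHom_ext {A : Type*} [Semiring A] [Algebra ℂ A] {φ ψ : R →ₐ[ℂ] A}
    (hx : φ x = ψ x) (hy : φ y = ψ y) : φ = ψ :=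
  FreeAlgebra.hom_ext <| funext fun i => by fin_cases i; exacts [hx, hy]

lemma lift_x_y : FreeAlgebra.lift ℂ ![x, y] = AlgHom.id ℂ R :=
  algHom_ext (by simp [x]) (by simp [y])

def ev (p : ℂ × ℂ) : R →ₐ[ℂ] ℂ := FreeAlgebra.lift ℂ ![p.1, p.2]

@[simp] lemma ev_x (p : ℂ × ℂ) : ev p x = p.1 := by simp [ev, x]

@[simp] lemma ev_y (p : ℂ × ℂ) : ev p y = p.2 := by simp [ev, y]

@[simp] lemma ev_aeval (p : ℂ × ℂ) (g : R) (P : ℂ[X]) : ev p (aeval g P) = P.eval (ev p g) := by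
  rw [← aeval_algHom_apply, coe_aeval_eq_eval]

def pointMap (f : R →ₐ[ℂ] R) (p : ℂ × ℂ) : ℂ × ℂ := (ev p (f x), ev p (f y))

lemma ev_comp (f : R →ₐ[ℂ] R) (p : ℂ × ℂ) : (ev p).comp f = ev (pointMap f p) :=
  algHom_ext (by simp [pointMap]) (by simp [pointMap])

lemma ev_map (f : R →ₐ[ℂ] R) (p : ℂ × ℂ) (u : R) : ev p (f u) = ev (pointMap f p) u :=
  DFunLike.congr_fun (ev_comp f p) u

lemma pointMap_mul (f g : R →ₐ[ℂ] R) (p : ℂ × ℂ) :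
    pointMap (f * g) p = pointMap g (pointMap f p) :=
  Prod.ext (ev_map f p (g x)) (ev_map f p (g y))

@[simp] lemma pointMap_id (p : ℂ × ℂ) : pointMap (AlgHom.id ℂ R) p = p := by
  simp [pointMap]

lemma pointMap_lift (u v : R) (p : ℂ × ℂ) :
    pointMap (FreeAlgebra.lift ℂ ![u, v]) p = (ev p u, ev p v) := by
  simp [pointMap, x, y]

lemma exists_X_sq_dvd_of_mem_span {K A : Type*} [CommSemiring K] [Semiring A] [Algebra K A]
    {m : ℕ} (hm : 3 ≤ m) (g : A) {a : A}
    (ha : a ∈ Submodule.span K {q : A | ∃ k : ℕ, 1 ≤ k ∧ q = g ^ (k * m - 1)}) :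
    ∃ P : K[X], X ^ 2 ∣ P ∧ aeval g P = a := by
  induction ha using Submodule.span_induction with
  | mem _ h =>
    obtain ⟨k, hk, rfl⟩ := h
    have : 3 ≤ k * m := hm.trans (Nat.le_mul_of_pos_left m hk)
    exact ⟨X ^ (k * m - 1), pow_dvd_pow X (by omega), by simp⟩
  | zero => exact ⟨0, dvd_zero _, map_zero _⟩
  | add _ _ _ _ h₁ h₂ =>
    obtain ⟨P, hP, rfl⟩ := h₁
    obtain ⟨Q, hQ, rfl⟩ := h₂
    exact ⟨P + Q, dvd_add hP hQ, map_add _ _ _⟩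
  | smul c _ _ h =>
    obtain ⟨P, hP, rfl⟩ := h
    exact ⟨c • P, by rw [smul_eq_C_mul]; exact dvd_mul_of_dvd_right hP _, map_smul _ _ _⟩

lemma eventually_forall_mul_norm_le_norm_eval {K : Type*} [NormedField K] {P : K[X]}
    (hP : P ≠ 0) (hdvd : X ^ 2 ∣ P) (C : ℝ) :
    ∀ᶠ M in atTop, ∀ c : K, M ≤ ‖c‖ → C * ‖c‖ ≤ ‖P.eval c‖ := by
  obtain ⟨Q, rfl⟩ := hdvd
  have hQ : Q ≠ 0 := right_ne_zero_of_mul hP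
  have hdeg : 0 < (X * Q).degree := by
    rw [degree_mul, degree_X, degree_eq_natDegree hQ]
    norm_cast
    omega
  have hlarge : ∀ᶠ c in Bornology.cobounded K, C ≤ ‖(X * Q).eval c‖ :=
    ((X * Q).tendsto_norm_atTop hdeg tendsto_norm_cobounded_atTop).eventually_ge_atTop C
  obtain ⟨M₀, -, hM₀⟩ := hasBasis_cobounded_norm.eventually_iff.1 hlarge
  filter_upwards [eventually_ge_atTop M₀] with M hM c hc
  have hc' : ‖(X ^ 2 * Q).eval c‖ = ‖c‖ * ‖(X * Q).eval c‖ := by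
    rw [pow_two, mul_assoc, eval_mul, eval_X, norm_mul]
  rw [hc', mul_comm]
  exact mul_le_mul_of_nonneg_left (hM₀ (hM.trans hc)) (norm_nonneg c)

lemma exists_pointMap_eq_of_inPhi {m : ℕ} (hm : 3 ≤ m) {f : R →ₐ[ℂ] R} (hf : InPhi m f)
    (hne : f ≠ AlgHom.id ℂ R) :
    ∃ P : ℂ[X], P ≠ 0 ∧ X ^ 2 ∣ P ∧ ∀ p, pointMap f p = (p.1, p.2 + P.eval p.1) := by
  obtain ⟨_, hp, rfl⟩ := hf
  obtain ⟨P, hdvd, rfl⟩ := exists_X_sq_dvd_of_mem_span hm x hp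
  refine ⟨P, ?_, hdvd, fun p => by simp [pointMap_lift]⟩
  rintro rfl
  exact hne (by simpa using lift_x_y)

lemma exists_pointMap_eq_of_inPsi {m : ℕ} (hm : 3 ≤ m) {f : R →ₐ[ℂ] R} (hf : InPsi m f)
    (hne : f ≠ AlgHom.id ℂ R) :
    ∃ P : ℂ[X], P ≠ 0 ∧ X ^ 2 ∣ P ∧ ∀ p, pointMap f p = (p.1 + P.eval p.2, p.2) := by
  obtain ⟨_, hq, rfl⟩ := hf
  obtain ⟨P, hdvd, rfl⟩ := exists_X_sq_dvd_of_mem_span hm y hq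
  refine ⟨P, ?_, hdvd, fun p => by simp [pointMap_lift]⟩
  rintro rfl
  exact hne (by simpa using lift_x_y)

def region (M : ℝ) : Bool → Set (ℂ × ℂ)
  | true => {p | M ≤ ‖p.1‖ ∧ ‖p.2‖ < ‖p.1‖}
  | false => {p | M ≤ ‖p.2‖ ∧ ‖p.1‖ < ‖p.2‖}

lemma region_nonempty (M : ℝ) (s : Bool) : (region M s).Nonempty := by
  obtain ⟨c, hc⟩ := NormedField.exists_lt_norm ℂ |M|
  have hM : M ≤ ‖c‖ := (le_abs_self M).trans hc.le
  have h0 : ‖(0 : ℂ)‖ < ‖c‖ := by simpa using (abs_nonneg M).trans_lt hc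
  cases s
  exacts [⟨(0, c), hM, h0⟩, ⟨(c, 0), hM, h0⟩]

def PingPong (M : ℝ) (s : Bool) (f : R →ₐ[ℂ] R) : Prop :=
  ∀ p ∈ region M s, pointMap f p ∈ region M (!s) ∧ ‖p‖ < ‖pointMap f p‖

lemma norm_lt_norm_add {E : Type*} [SeminormedAddCommGroup E] {a b c : E} (hba : ‖b‖ < ‖a‖) (hc : 2 * ‖a‖ ≤ ‖c‖) : ‖a‖ < ‖b + c‖ := by
  have := norm_sub_norm_le c (-b)
  rw [norm_neg, sub_neg_eq_add, add_comm] at this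
  linarith

lemma pingPong_true {M : ℝ} {f : R →ₐ[ℂ] R} {P : ℂ[X]}
    (hP : ∀ c : ℂ, M ≤ ‖c‖ → 2 * ‖c‖ ≤ ‖P.eval c‖)
    (hf : ∀ p, pointMap f p = (p.1, p.2 + P.eval p.1)) : PingPong M true f := by
  rintro ⟨a, b⟩ ⟨hMa, hba⟩
  have h := norm_lt_norm_add hba (hP a hMa)
  rw [hf, Prod.norm_def, Prod.norm_def, max_eq_left hba.le]
  exact ⟨⟨hMa.trans h.le, h⟩, lt_max_of_lt_right h⟩

lemma pingPong_false {M : ℝ} {f : R →ₐ[ℂ] R} {P : ℂ[X]}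
    (hP : ∀ c : ℂ, M ≤ ‖c‖ → 2 * ‖c‖ ≤ ‖P.eval c‖)
    (hf : ∀ p, pointMap f p = (p.1 + P.eval p.2, p.2)) : PingPong M false f := by
  rintro ⟨a, b⟩ ⟨hMb, hab⟩
  have h := norm_lt_norm_add hab (hP b hMb)
  rw [hf, Prod.norm_def, Prod.norm_def, max_eq_right hab.le]
  exact ⟨⟨hMb.trans h.le, h⟩, lt_max_of_lt_left h⟩

lemma eventually_pingPong {m : ℕ} (hm : 3 ≤ m) {f : R →ₐ[ℂ] R} [Decidable (InPhi m f)]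
    (hf : (InPhi m f ∧ f ≠ AlgHom.id ℂ R) ∨ (InPsi m f ∧ f ≠ AlgHom.id ℂ R)) :
    ∀ᶠ M in atTop, PingPong M (decide (InPhi m f)) f := by
  by_cases hΦ : InPhi m f
  · obtain ⟨P, hP, hdvd, hfP⟩ := exists_pointMap_eq_of_inPhi hm hΦ (hf.elim And.right And.right)
    filter_upwards [eventually_forall_mul_norm_le_norm_eval hP hdvd 2] with M hM
    simpa [hΦ] using pingPong_true hM hfP
  · obtain ⟨hΨ, hne⟩ := hf.resolve_left (fun h => hΦ h.1)
    obtain ⟨P, hP, hdvd, hfP⟩ := exists_pointMap_eq_of_inPsi hm hΨ hne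
    filter_upwards [eventually_forall_mul_norm_le_norm_eval hP hdvd 2] with M hM
    simpa [hΦ] using pingPong_false hM hfP

lemma norm_lt_norm_pointMap_prod {M : ℝ} {side : (R →ₐ[ℂ] R) → Bool} :
    ∀ (l : List (R →ₐ[ℂ] R)) (hl : l ≠ []), l.IsChain (fun f g => side g = !side f) →
      (∀ f ∈ l, PingPong M (side f) f) →
      ∀ p ∈ region M (side (l.head hl)), ‖p‖ < ‖pointMap l.prod p‖
  | [f], _, _, hping, p, hp => by simpa using (hping f (by simp) p hp).2
  | f :: g :: l, _, hchain, hping, p, hp => by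
    obtain ⟨hfg, hchain⟩ := List.isChain_cons_cons.1 hchain
    obtain ⟨hq, hlt⟩ := hping f List.mem_cons_self p hp
    rw [List.prod_cons, pointMap_mul]
    refine hlt.trans (norm_lt_norm_pointMap_prod (g :: l) (List.cons_ne_nil g l) hchain
      (fun h hh => hping h (List.mem_cons_of_mem f hh)) _ ?_)
    simpa [hfg] using hq

/-- Let `m ≥ 3`.  No nonempty alternating composition of non-identity
elements of `Φ` and `Ψ` is the identity; equivalently, the subgroup of `Aut(ℂ⟨x,y⟩)`
generated by `Φ` and `Ψ` is the free product `Φ ∗ Ψ`.  (Composition is taken in the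
endomorphism monoid of `R`, in which `f * g = f ∘ g`.) -/
theorem statement4 (m : ℕ) (hm : 3 ≤ m) (r : ℕ) (hr : 1 ≤ r)
    (σ : Fin r → (R →ₐ[ℂ] R))
    (hσ : ∀ t : Fin r,
      (InPhi m (σ t) ∧ σ t ≠ AlgHom.id ℂ R) ∨ (InPsi m (σ t) ∧ σ t ≠ AlgHom.id ℂ R))
    (halt : ∀ (t : ℕ) (h : t + 1 < r),
      ¬(InPhi m (σ ⟨t, by omega⟩) ∧ InPhi m (σ ⟨t + 1, h⟩)) ∧
      ¬(InPsi m (σ ⟨t, by omega⟩) ∧ InPsi m (σ ⟨t + 1, h⟩))) :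
    (List.ofFn σ).prod ≠ AlgHom.id ℂ R := by
  classical
  intro hprod
  obtain ⟨M, hM⟩ := (eventually_all.2 fun t => eventually_pingPong hm (hσ t)).exists
  have hchain : (List.ofFn σ).IsChain (fun f g => decide (InPhi m g) = !decide (InPhi m f)) :=
    List.isChain_ofFn.2 fun t ht => by
      have halt_t := halt t ht
      rcases hσ ⟨t, by omega⟩ with ⟨h₁, -⟩ | ⟨h₁, -⟩ <;>
        rcases hσ ⟨t + 1, ht⟩ with ⟨h₂, -⟩ | ⟨h₂, -⟩ <;> simp_all
  have hne : List.ofFn σ ≠ [] := by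
    rw [Ne, List.ofFn_eq_nil_iff]
    omega
  obtain ⟨p, hp⟩ := region_nonempty M (decide (InPhi m ((List.ofFn σ).head hne)))
  have hgrow := norm_lt_norm_pointMap_prod _ hne hchain
    (fun f hf => by obtain ⟨t, rfl⟩ := List.mem_ofFn.1 hf; exact hM t) p hp
  rw [hprod, pointMap_id] at hgrow
  exact lt_irrefl _ hgrow

end FreeAlgAut
end
end

section
/- Let m ≥ 1. If (X_i, Y_i, v, w) is a representation datum (i.e. satisfies relations (qv1)–(qv2)), then for every k ≥ 1 and μ, ν ∈ ℂ the transformed tuples Ψ_{k,μ}(X_i, Y_i, v, w) = (X̃_i, Y_i, v, w), where X̃_i := X_i + μ·Y_{i−1}⋯Y₀·(Y_{m−1}⋯Y₀)^{k−1}·Y_{m−1}⋯Y_{i+1}, and Φ_{k,ν}(X_i, Y_i, v, w) = (X_i, Ỹ_i, v, w), where Ỹ_i := Y_i + ν·X_{i+1}⋯X_{m−1}·(X₀⋯X_{m−1})^{k−1}·X₀⋯X_{i−1}, again satisfy the relations (qv1)–(qv2). Moreover Ψ_{k,−μ}(Ψ_{k,μ}(X_i,Y_i,v,w)) = (X_i,Y_i,v,w)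 and Φ_{k,−ν}(Φ_{k,ν}(X_i,Y_i,v,w)) = (X_i,Y_i,v,w). -/
open Matrix

namespace CM

noncomputable section

variable {α : ℕ → ℕ}

/-- Reindex a square complex matrix along an equality of sizes. -/
def recast {a b : ℕ} (h : a = b) (M : Matrix (Fin a) (Fin a) ℂ) :
    Matrix (Fin b) (Fin b) ℂ :=
  M.submatrix (Fin.cast h.symm) (Fin.cast h.symm)

/-- `yprod Y k = Y (k-1) * ⋯ * Y 1 * Y 0`. -/
def yprod (Y : ∀ i : ℕ, Matrix (Fin (α (i + 1))) (Fin (α i)) ℂ) :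
    (k : ℕ) → Matrix (Fin (α k)) (Fin (α 0)) ℂ
  | 0 => 1
  | k + 1 => Y k * yprod Y k

/-- `xprod X k = X 0 * X 1 * ⋯ * X (k-1)`. -/
def xprod (X : ∀ i : ℕ, Matrix (Fin (α i)) (Fin (α (i + 1))) ℂ) :
    (k : ℕ) → Matrix (Fin (α 0)) (Fin (α k)) ℂ
  | 0 => 1
  | k + 1 => xprod X k * X k

/-- `ysegFrom Y i k = Y (i+k-1) * ⋯ * Y (i+1) * Y i`. -/
def ysegFrom (Y : ∀ i : ℕ, Matrix (Fin (α (i + 1))) (Fin (α i)) ℂ) (i : ℕ) :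
    (k : ℕ) → Matrix (Fin (α (i + k))) (Fin (α i)) ℂ
  | 0 => (1 : Matrix (Fin (α i)) (Fin (α i)) ℂ)
  | k + 1 => Y (i + k) * ysegFrom Y i k

/-- `xsegFrom X i k = X i * X (i+1) * ⋯ * X (i+k-1)`. -/
def xsegFrom (X : ∀ i : ℕ, Matrix (Fin (α i)) (Fin (α (i + 1))) ℂ) (i : ℕ) :
    (k : ℕ) → Matrix (Fin (α i)) (Fin (α (i + k))) ℂ
  | 0 => (1 : Matrix (Fin (α i)) (Fin (α i)) ℂ)
  | k + 1 => xsegFrom X i k * X (i + k)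

/-- A tuple `(X_i, Y_i, v, w)` of representation data for the framed cyclic quiver with
`m = p + 1` vertices `0, 1, …, p` (only the components with index `≤ p` are meaningful;
the remaining ones are required to vanish where relevant). -/
structure Datum (α : ℕ → ℕ) where
  X : ∀ i : ℕ, Matrix (Fin (α i)) (Fin (α (i + 1))) ℂ
  Y : ∀ i : ℕ, Matrix (Fin (α (i + 1))) (Fin (α i)) ℂ
  v : Fin (α 0) → ℂ
  w : Fin (α 0) → ℂ

/-- The relations (qv1)–(qv2) for the deformed preprojective algebra of the framed
cyclic quiver with `m = p + 1` vertices. -/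
def IsRepDatum (p : ℕ) (lam : ℕ → ℂ) (h0 : α (p + 1) = α 0) (d : Datum α) : Prop :=
  d.X 0 * d.Y 0 - recast h0 (d.Y p * d.X p) + vecMulVec d.v d.w
      = lam 0 • (1 : Matrix (Fin (α 0)) (Fin (α 0)) ℂ) ∧
    ∀ j : ℕ, j < p → d.X (j + 1) * d.Y (j + 1) - d.Y j * d.X j = lam (j + 1) • 1

/-- `A = Y_{m-1} ⋯ Y_1 Y_0`, as a square matrix at the vertex `0`. -/
def Amat (p : ℕ) (h0 : α (p + 1) = α 0)
    (Y : ∀ i : ℕ, Matrix (Fin (α (i + 1))) (Fin (α i)) ℂ) :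
    Matrix (Fin (α 0)) (Fin (α 0)) ℂ :=
  (yprod Y (p + 1)).submatrix (Fin.cast h0.symm) id

/-- `B = X_0 X_1 ⋯ X_{m-1}`, as a square matrix at the vertex `0`. -/
def Bmat (p : ℕ) (h0 : α (p + 1) = α 0)
    (X : ∀ i : ℕ, Matrix (Fin (α i)) (Fin (α (i + 1))) ℂ) :
    Matrix (Fin (α 0)) (Fin (α 0)) ℂ :=
  (xprod X (p + 1)).submatrix id (Fin.cast h0.symm)

/-- `C_k = Y_{m-1} ⋯ Y_{m-k} X_{m-k} ⋯ X_{m-1}` (for `k ≤ m`; junk value `1` otherwise),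
as a square matrix at the vertex `0`; `C_0 = Id`. -/
def Cmat (p : ℕ) (h0 : α (p + 1) = α 0)
    (X : ∀ i : ℕ, Matrix (Fin (α i)) (Fin (α (i + 1))) ℂ)
    (Y : ∀ i : ℕ, Matrix (Fin (α (i + 1))) (Fin (α i)) ℂ) (k : ℕ) :
    Matrix (Fin (α 0)) (Fin (α 0)) ℂ :=
  if h : k ≤ p + 1 then
    recast ((congrArg α (by omega : p + 1 - k + k = p + 1)).trans h0)
      (ysegFrom Y (p + 1 - k) k * xsegFrom X (p + 1 - k) k)
  else 1

/-- `Y_{m-1} ⋯ Y_{i+1}` viewed as a matrix from vertex `i+1` to vertex `0` (zero for `i > p`). -/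
def ycap (p : ℕ) (h0 : α (p + 1) = α 0)
    (Y : ∀ i : ℕ, Matrix (Fin (α (i + 1))) (Fin (α i)) ℂ) (i : ℕ) :
    Matrix (Fin (α 0)) (Fin (α (i + 1))) ℂ :=
  if h : i ≤ p then
    (ysegFrom Y (i + 1) (p - i)).submatrix
      (Fin.cast (h0.symm.trans (congrArg α (by omega : p + 1 = i + 1 + (p - i))))) id
  else 0

/-- `X_{i+1} ⋯ X_{m-1}` viewed as a matrix from vertex `0` to vertex `i+1` (zero for `i > p`). -/
def xcap (p : ℕ) (h0 : α (p + 1) = α 0)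
    (X : ∀ i : ℕ, Matrix (Fin (α i)) (Fin (α (i + 1))) ℂ) (i : ℕ) :
    Matrix (Fin (α (i + 1))) (Fin (α 0)) ℂ :=
  if h : i ≤ p then
    (xsegFrom X (i + 1) (p - i)).submatrix id
      (Fin.cast (h0.symm.trans (congrArg α (by omega : p + 1 = i + 1 + (p - i)))))
  else 0

/-- The transformation `Ψ_{k,μ}`:
`X_i ↦ X_i + μ • Y_{i-1} ⋯ Y_0 (Y_{m-1} ⋯ Y_0)^{k-1} Y_{m-1} ⋯ Y_{i+1}`. -/
def psiT (p : ℕ) (h0 : α (p + 1) = α 0) (k : ℕ) (μ : ℂ) (d : Datum α) : Datum α where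
  X := fun i => d.X i + μ • (yprod d.Y i * Amat p h0 d.Y ^ (k - 1) * ycap p h0 d.Y i)
  Y := d.Y
  v := d.v
  w := d.w

/-- The transformation `Φ_{k,ν}`:
`Y_i ↦ Y_i + ν • X_{i+1} ⋯ X_{m-1} (X_0 ⋯ X_{m-1})^{k-1} X_0 ⋯ X_{i-1}`. -/
def phiT (p : ℕ) (h0 : α (p + 1) = α 0) (k : ℕ) (ν : ℂ) (d : Datum α) : Datum α where
  X := d.X
  Y := fun i => d.Y i + ν • (xcap p h0 d.X i * Bmat p h0 d.X ^ (k - 1) * xprod d.X i)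
  v := d.v
  w := d.w

/-- Base change by a family of (invertible) matrices `g_i`. -/
def bcT (p : ℕ) (g : ∀ i : ℕ, Matrix (Fin (α i)) (Fin (α i)) ℂ) (d : Datum α) : Datum α where
  X := fun i => if i ≤ p then g i * d.X i * (g (i + 1))⁻¹ else d.X i
  Y := fun i => if i ≤ p then g (i + 1) * d.Y i * (g i)⁻¹ else d.Y i
  v := g 0 *ᵥ d.v
  w := vecMul d.w (g 0)⁻¹

/-- One elementary move: a `Ψ_{k,μ}`, a `Φ_{k,ν}`, or a base change. -/
def Step (p : ℕ) (h0 : α (p + 1) = α 0) (d d' : Datum α) : Prop :=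
  (∃ k : ℕ, ∃ μ : ℂ, 1 ≤ k ∧ d' = psiT p h0 k μ d) ∨
  (∃ k : ℕ, ∃ ν : ℂ, 1 ≤ k ∧ d' = phiT p h0 k ν d) ∨
  (∃ g : ∀ i : ℕ, Matrix (Fin (α i)) (Fin (α i)) ℂ,
      (∀ i, IsUnit (g i)) ∧ g (p + 1) = recast h0.symm (g 0) ∧ d' = bcT p g d)

/-- `λ` is generic: `λ·β ≠ 0` for every root `β` of the affine quiver of type `Ã_{m-1}`. -/
def Generic (p : ℕ) (lam : ℕ → ℂ) : Prop :=
  (∑ t ∈ Finset.range (p + 1), lam t) ≠ 0 ∧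
    ∀ i j : ℕ, 1 ≤ i → i ≤ j → j ≤ p → ∀ k : ℤ,
      (∑ t ∈ Finset.Icc i j, lam t) + (k : ℂ) * ∑ t ∈ Finset.range (p + 1), lam t ≠ 0

section Toolkit

private lemma submatrix_congr' {a b a' b' : ℕ} (M : Matrix (Fin a) (Fin b) ℂ)
    {f f' : Fin a' → Fin a} {g g' : Fin b' → Fin b}
    (hf : ∀ x, (f x : ℕ) = (f' x : ℕ)) (hg : ∀ x, (g x : ℕ) = (g' x : ℕ)) :
    M.submatrix f g = M.submatrix f' g' := by
  obtain rfl : f = f' := funext fun x => Fin.ext (hf x)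
  obtain rfl : g = g' := funext fun x => Fin.ext (hg x)
  rfl

private lemma one_submatrix {a b : ℕ} (h : b = a) (f g : Fin b → Fin a)
    (hf : ∀ x, (f x : ℕ) = (x : ℕ)) (hg : ∀ x, (g x : ℕ) = (x : ℕ)) :
    (1 : Matrix (Fin a) (Fin a) ℂ).submatrix f g = 1 := by
  subst h
  obtain rfl : f = id := funext fun x => Fin.ext (hf x)
  obtain rfl : g = id := funext fun x => Fin.ext (hg x)
  simp

private lemma sub_mul_left {a a' b c : ℕ} (f : Fin a' → Fin a)
    (M : Matrix (Fin a) (Fin b) ℂ) (N : Matrix (Fin b) (Fin c) ℂ) :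
    (M * N).submatrix f id = M.submatrix f id * N := by
  ext i j; simp [Matrix.mul_apply]

private lemma sub_mul_right {a b c c' : ℕ} (g : Fin c' → Fin c)
    (M : Matrix (Fin a) (Fin b) ℂ) (N : Matrix (Fin b) (Fin c) ℂ) :
    (M * N).submatrix id g = M * N.submatrix id g := by
  ext i j; simp [Matrix.mul_apply]

private lemma castL {a b b' c : ℕ} (e : b = b') (M : Matrix (Fin a) (Fin b') ℂ)
    (N : Matrix (Fin b) (Fin c) ℂ) :
    M.submatrix id (Fin.cast e) * N = M * N.submatrix (Fin.cast e.symm) id := by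
  ext i j
  simp only [Matrix.mul_apply, Matrix.submatrix_apply, id_eq]
  refine Fintype.sum_equiv (finCongr e) _ _ (fun t => ?_)
  have h1 : (finCongr e t : Fin b') = Fin.cast e t := rfl
  have h2 : Fin.cast e.symm (Fin.cast e t) = t := Fin.ext rfl
  rw [h1, h2]

private lemma castR {a b b' c : ℕ} (e : b = b') (M : Matrix (Fin a) (Fin b) ℂ)
    (N : Matrix (Fin b') (Fin c) ℂ) :
    M * N.submatrix (Fin.cast e) id = M.submatrix id (Fin.cast e.symm) * N := by
  ext i j
  simp only [Matrix.mul_apply, Matrix.submatrix_apply, id_eq]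
  refine Fintype.sum_equiv (finCongr e) _ _ (fun t => ?_)
  have h1 : (finCongr e t : Fin b') = Fin.cast e t := rfl
  have h2 : Fin.cast e.symm (Fin.cast e t) = t := Fin.ext rfl
  rw [h1, h2]

private lemma Y_cast_swap (Y : ∀ i : ℕ, Matrix (Fin (α (i + 1))) (Fin (α i)) ℂ)
    {n n' : ℕ} (h : n = n') (g : Fin (α n') → Fin (α n))
    (f : Fin (α (n + 1)) → Fin (α (n' + 1)))
    (hg : ∀ x, (g x : ℕ) = (x : ℕ)) (hf : ∀ x, (f x : ℕ) = (x : ℕ)) :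
    (Y n).submatrix id g = (Y n').submatrix f id := by
  subst h
  obtain rfl : g = id := funext fun x => Fin.ext (hg x)
  obtain rfl : f = id := funext fun x => Fin.ext (hf x)
  rfl

private lemma X_cast_swap (X : ∀ i : ℕ, Matrix (Fin (α i)) (Fin (α (i + 1))) ℂ)
    {n n' : ℕ} (h : n = n') (g : Fin (α n') → Fin (α n))
    (f : Fin (α (n + 1)) → Fin (α (n' + 1)))
    (hg : ∀ x, (g x : ℕ) = (x : ℕ)) (hf : ∀ x, (f x : ℕ) = (x : ℕ)) :
    (X n).submatrix g id = (X n').submatrix id f := by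
  subst h
  obtain rfl : g = id := funext fun x => Fin.ext (hg x)
  obtain rfl : f = id := funext fun x => Fin.ext (hf x)
  rfl

private lemma ysegFrom_cast (Y : ∀ i : ℕ, Matrix (Fin (α (i + 1))) (Fin (α i)) ℂ)
    (i : ℕ) {q q' : ℕ} (h : q = q') (f : Fin (α (i + q')) → Fin (α (i + q)))
    (hf : ∀ x, (f x : ℕ) = (x : ℕ)) :
    (ysegFrom Y i q).submatrix f id = ysegFrom Y i q' := by
  subst h
  obtain rfl : f = id := funext fun x => Fin.ext (hf x)
  simp

private lemma xsegFrom_cast (X : ∀ i : ℕ, Matrix (Fin (α i)) (Fin (α (i + 1))) ℂ)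
    (i : ℕ) {q q' : ℕ} (h : q = q') (f : Fin (α (i + q')) → Fin (α (i + q)))
    (hf : ∀ x, (f x : ℕ) = (x : ℕ)) :
    (xsegFrom X i q).submatrix id f = xsegFrom X i q' := by
  subst h
  obtain rfl : f = id := funext fun x => Fin.ext (hf x)
  simp

end Toolkit
section Peel

private lemma ysegFrom_peel (Y : ∀ i : ℕ, Matrix (Fin (α (i + 1))) (Fin (α i)) ℂ)
    (i q : ℕ) :
    ysegFrom Y i (q + 1) =
      (ysegFrom Y (i + 1) q).submatrix
        (Fin.cast (congrArg α (by omega : i + (q + 1) = i + 1 + q))) id * Y i := by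
  induction q with
  | zero =>
    ext a b
    simp only [ysegFrom, Matrix.mul_one, Matrix.mul_apply, Matrix.submatrix_apply,
      Matrix.one_apply, id_eq, ite_mul, one_mul, zero_mul, mul_ite, mul_one, mul_zero,
      Finset.sum_ite_eq, Finset.sum_ite_eq', Finset.mem_univ, if_true]
    rfl
  | succ q ih =>
    show Y (i + (q + 1)) * ysegFrom Y i (q + 1) = _
    rw [ih, show ysegFrom Y (i + 1) (q + 1) = Y (i + 1 + q) * ysegFrom Y (i + 1) q from rfl,
      sub_mul_left, ← Matrix.mul_assoc, castR]
    exact congrArg (fun Z => Z * ysegFrom Y (i + 1) q * Y i)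
      (Y_cast_swap Y (by omega : i + (q + 1) = i + 1 + q) _ _ (fun x => rfl) (fun x => rfl))

private lemma xsegFrom_peel (X : ∀ i : ℕ, Matrix (Fin (α i)) (Fin (α (i + 1))) ℂ)
    (i q : ℕ) :
    xsegFrom X i (q + 1) =
      X i * (xsegFrom X (i + 1) q).submatrix id
        (Fin.cast (congrArg α (by omega : i + (q + 1) = i + 1 + q))) := by
  induction q with
  | zero =>
    ext a b
    simp only [xsegFrom, Matrix.one_mul, Matrix.mul_apply, Matrix.submatrix_apply,
      Matrix.one_apply, id_eq, ite_mul, one_mul, zero_mul, mul_ite, mul_one, mul_zero,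
      Finset.sum_ite_eq, Finset.sum_ite_eq', Finset.mem_univ, if_true]
    rfl
  | succ q ih =>
    show xsegFrom X i (q + 1) * X (i + (q + 1)) = _
    rw [ih, show xsegFrom X (i + 1) (q + 1) = xsegFrom X (i + 1) q * X (i + 1 + q) from rfl,
      sub_mul_right, Matrix.mul_assoc, castL]
    exact congrArg (fun Z => X i * (xsegFrom X (i + 1) q * Z))
      (X_cast_swap X (by omega : i + (q + 1) = i + 1 + q) _ _ (fun x => rfl) (fun x => rfl))

private lemma yprod_eq (Y : ∀ i : ℕ, Matrix (Fin (α (i + 1))) (Fin (α i)) ℂ) (n : ℕ) :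
    yprod Y n = (ysegFrom Y 0 n).submatrix
      (Fin.cast (congrArg α (Nat.zero_add n).symm)) id := by
  induction n with
  | zero =>
    ext a b
    simp only [yprod, ysegFrom, Matrix.submatrix_apply, Matrix.one_apply, id_eq, Fin.ext_iff,
      Fin.coe_cast]
  | succ n ih =>
    show Y n * yprod Y n = _
    rw [ih, show ysegFrom Y 0 (n + 1) = Y (0 + n) * ysegFrom Y 0 n from rfl,
      sub_mul_left, castR]
    exact congrArg (fun Z => Z * ysegFrom Y 0 n)
      (Y_cast_swap Y (Nat.zero_add n).symm _ _ (fun x => rfl) (fun x => rfl))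

private lemma xprod_eq (X : ∀ i : ℕ, Matrix (Fin (α i)) (Fin (α (i + 1))) ℂ) (n : ℕ) :
    xprod X n = (xsegFrom X 0 n).submatrix id
      (Fin.cast (congrArg α (Nat.zero_add n).symm)) := by
  induction n with
  | zero =>
    ext a b
    simp only [xprod, xsegFrom, Matrix.submatrix_apply, Matrix.one_apply, id_eq, Fin.ext_iff,
      Fin.coe_cast]
  | succ n ih =>
    show xprod X n * X n = _
    rw [ih, show xsegFrom X 0 (n + 1) = xsegFrom X 0 n * X (0 + n) from rfl,
      sub_mul_right, castL]
    exact congrArg (fun Z => xsegFrom X 0 n * Z)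
      (X_cast_swap X (Nat.zero_add n).symm _ _ (fun x => rfl) (fun x => rfl))

end Peel
section Caps

private lemma recast_add {a b : ℕ} (h : a = b) (M N : Matrix (Fin a) (Fin a) ℂ) :
    recast h (M + N) = recast h M + recast h N := rfl

private lemma recast_smul {a b : ℕ} (h : a = b) (c : ℂ) (M : Matrix (Fin a) (Fin a) ℂ) :
    recast h (c • M) = c • recast h M := rfl

private lemma recast_mul {a b c : ℕ} (h : a = b) (W : Matrix (Fin a) (Fin c) ℂ)
    (Z : Matrix (Fin c) (Fin a) ℂ) :
    recast h (W * Z) =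
      W.submatrix (Fin.cast h.symm) id * Z.submatrix id (Fin.cast h.symm) := by
  ext i j
  simp [recast, Matrix.mul_apply]

variable (p : ℕ) (h0 : α (p + 1) = α 0)

private lemma ycap_step (Y : ∀ i : ℕ, Matrix (Fin (α (i + 1))) (Fin (α i)) ℂ)
    {j : ℕ} (hj : j < p) :
    ycap p h0 Y (j + 1) * Y (j + 1) = ycap p h0 Y j := by
  rw [ycap, ycap, dif_pos (show j + 1 ≤ p from hj), dif_pos (le_of_lt hj),
    ← ysegFrom_cast Y (j + 1) (show (p - (j + 1)) + 1 = p - j by omega)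
      (Fin.cast (congrArg α (by omega))) (fun x => rfl),
    ysegFrom_peel Y (j + 1) (p - (j + 1))]
  simp only [sub_mul_left, Matrix.submatrix_submatrix]
  exact congrArg (· * Y (j + 1)) (submatrix_congr' _ (fun x => rfl) (fun x => rfl))

private lemma ycap_zero_mul (Y : ∀ i : ℕ, Matrix (Fin (α (i + 1))) (Fin (α i)) ℂ) :
    ycap p h0 Y 0 * Y 0 = Amat p h0 Y := by
  rw [ycap, dif_pos (Nat.zero_le p), Amat, yprod_eq Y (p + 1), ysegFrom_peel Y 0 p]
  simp only [sub_mul_left, Matrix.submatrix_submatrix]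
  exact congrArg (· * Y 0) (submatrix_congr' _ (fun x => rfl) (fun x => rfl))

private lemma ycap_last (Y : ∀ i : ℕ, Matrix (Fin (α (i + 1))) (Fin (α i)) ℂ) :
    (ycap p h0 Y p).submatrix id (Fin.cast h0.symm) = 1 := by
  rw [ycap, dif_pos (le_refl p),
    ← ysegFrom_cast Y (p + 1) (Nat.sub_self p).symm
      (Fin.cast (congrArg α (by omega))) (fun x => rfl)]
  simp only [Matrix.submatrix_submatrix]
  exact one_submatrix h0.symm _ _ (fun x => rfl) (fun x => rfl)

private lemma xcap_step (X : ∀ i : ℕ, Matrix (Fin (α i)) (Fin (α (i + 1))) ℂ)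
    {j : ℕ} (hj : j < p) :
    X (j + 1) * xcap p h0 X (j + 1) = xcap p h0 X j := by
  rw [xcap, xcap, dif_pos (show j + 1 ≤ p from hj), dif_pos (le_of_lt hj),
    ← xsegFrom_cast X (j + 1) (show (p - (j + 1)) + 1 = p - j by omega)
      (Fin.cast (congrArg α (by omega))) (fun x => rfl),
    xsegFrom_peel X (j + 1) (p - (j + 1))]
  simp only [sub_mul_right, Matrix.submatrix_submatrix]
  exact congrArg (X (j + 1) * ·) (submatrix_congr' _ (fun x => rfl) (fun x => rfl))

private lemma xcap_zero_mul (X : ∀ i : ℕ, Matrix (Fin (α i)) (Fin (α (i + 1))) ℂ) :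
    X 0 * xcap p h0 X 0 = Bmat p h0 X := by
  rw [xcap, dif_pos (Nat.zero_le p), Bmat, xprod_eq X (p + 1), xsegFrom_peel X 0 p]
  simp only [sub_mul_right, Matrix.submatrix_submatrix]
  exact congrArg (X 0 * ·) (submatrix_congr' _ (fun x => rfl) (fun x => rfl))

private lemma xcap_last (X : ∀ i : ℕ, Matrix (Fin (α i)) (Fin (α (i + 1))) ℂ) :
    (xcap p h0 X p).submatrix (Fin.cast h0.symm) id = 1 := by
  rw [xcap, dif_pos (le_refl p),
    ← xsegFrom_cast X (p + 1) (Nat.sub_self p).symm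
      (Fin.cast (congrArg α (by omega))) (fun x => rfl)]
  simp only [Matrix.submatrix_submatrix]
  exact one_submatrix h0.symm _ _ (fun x => rfl) (fun x => rfl)

end Caps

/-- The transformations `Ψ_{k,μ}` and `Φ_{k,ν}` (`k ≥ 1`) carry
representation data (tuples satisfying the relations (qv1)–(qv2)) to representation data,
and `Ψ_{k,−μ} ∘ Ψ_{k,μ} = id`, `Φ_{k,−ν} ∘ Φ_{k,ν} = id` on representation data. -/
theorem statement5 (p : ℕ) (α : ℕ → ℕ) (lam : ℕ → ℂ) (h0 : α (p + 1) = α 0)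
    (k : ℕ) (hk : 1 ≤ k) (μ ν : ℂ) (d : Datum α) (hd : IsRepDatum p lam h0 d) :
    IsRepDatum p lam h0 (psiT p h0 k μ d) ∧
    IsRepDatum p lam h0 (phiT p h0 k ν d) ∧
    psiT p h0 k (-μ) (psiT p h0 k μ d) = d ∧
    phiT p h0 k (-ν) (phiT p h0 k ν d) = d := by
  obtain ⟨h1, h2⟩ := hd
  have hcA : Amat p h0 d.Y * Amat p h0 d.Y ^ (k - 1)
      = Amat p h0 d.Y ^ (k - 1) * Amat p h0 d.Y := (pow_mul_comm' _ _).symm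
  have hcB : Bmat p h0 d.X * Bmat p h0 d.X ^ (k - 1)
      = Bmat p h0 d.X ^ (k - 1) * Bmat p h0 d.X := (pow_mul_comm' _ _).symm
  refine ⟨⟨?_, ?_⟩, ⟨?_, ?_⟩, ?_, ?_⟩
  · -- psi qv1
    show (d.X 0 + μ • (yprod d.Y 0 * Amat p h0 d.Y ^ (k - 1) * ycap p h0 d.Y 0)) * d.Y 0
        - recast h0 (d.Y p *
            (d.X p + μ • (yprod d.Y p * Amat p h0 d.Y ^ (k - 1) * ycap p h0 d.Y p)))
        + vecMulVec d.v d.w = lam 0 • 1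
    have e1 : (yprod d.Y 0 * Amat p h0 d.Y ^ (k - 1) * ycap p h0 d.Y 0) * d.Y 0
        = Amat p h0 d.Y ^ (k - 1) * Amat p h0 d.Y := by
      rw [show yprod d.Y 0 = 1 from rfl, Matrix.one_mul, Matrix.mul_assoc,
        ycap_zero_mul p h0 d.Y]
    have e0 : d.Y p * (yprod d.Y p * Amat p h0 d.Y ^ (k - 1) * ycap p h0 d.Y p)
        = (yprod d.Y (p + 1) * Amat p h0 d.Y ^ (k - 1)) * ycap p h0 d.Y p := by
      rw [show yprod d.Y (p + 1) = d.Y p * yprod d.Y p from rfl]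
      simp only [Matrix.mul_assoc]
    have e2 : recast h0 (d.Y p *
          (yprod d.Y p * Amat p h0 d.Y ^ (k - 1) * ycap p h0 d.Y p))
        = Amat p h0 d.Y * Amat p h0 d.Y ^ (k - 1) := by
      rw [e0, recast_mul h0, sub_mul_left, ycap_last p h0 d.Y, Matrix.mul_one]
      rfl
    rw [Matrix.add_mul, Matrix.smul_mul, e1, Matrix.mul_add, Matrix.mul_smul,
      recast_add h0, recast_smul h0, e2, hcA, ← h1]
    abel
  · -- psi qv2
    intro j hj
    show (d.X (j + 1) + μ • (yprod d.Y (j + 1) * Amat p h0 d.Y ^ (k - 1)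
            * ycap p h0 d.Y (j + 1))) * d.Y (j + 1)
        - d.Y j * (d.X j + μ • (yprod d.Y j * Amat p h0 d.Y ^ (k - 1) * ycap p h0 d.Y j))
        = lam (j + 1) • 1
    have e1 : (yprod d.Y (j + 1) * Amat p h0 d.Y ^ (k - 1) * ycap p h0 d.Y (j + 1))
          * d.Y (j + 1)
        = yprod d.Y (j + 1) * Amat p h0 d.Y ^ (k - 1) * ycap p h0 d.Y j := by
      rw [Matrix.mul_assoc, ycap_step p h0 d.Y hj]
    have e2 : d.Y j * (yprod d.Y j * Amat p h0 d.Y ^ (k - 1) * ycap p h0 d.Y j)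
        = yprod d.Y (j + 1) * Amat p h0 d.Y ^ (k - 1) * ycap p h0 d.Y j := by
      rw [show yprod d.Y (j + 1) = d.Y j * yprod d.Y j from rfl]
      simp only [Matrix.mul_assoc]
    rw [Matrix.add_mul, Matrix.smul_mul, e1, Matrix.mul_add, Matrix.mul_smul, e2, ← h2 j hj]
    abel
  · -- phi qv1
    show d.X 0 * (d.Y 0 + ν • (xcap p h0 d.X 0 * Bmat p h0 d.X ^ (k - 1) * xprod d.X 0))
        - recast h0 ((d.Y p
            + ν • (xcap p h0 d.X p * Bmat p h0 d.X ^ (k - 1) * xprod d.X p)) * d.X p)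
        + vecMulVec d.v d.w = lam 0 • 1
    have e1 : d.X 0 * (xcap p h0 d.X 0 * Bmat p h0 d.X ^ (k - 1) * xprod d.X 0)
        = Bmat p h0 d.X * Bmat p h0 d.X ^ (k - 1) := by
      rw [show xprod d.X 0 = 1 from rfl, Matrix.mul_one, ← Matrix.mul_assoc,
        xcap_zero_mul p h0 d.X]
    have e0 : (xcap p h0 d.X p * Bmat p h0 d.X ^ (k - 1) * xprod d.X p) * d.X p
        = (xcap p h0 d.X p * Bmat p h0 d.X ^ (k - 1)) * xprod d.X (p + 1) := by
      rw [Matrix.mul_assoc, show xprod d.X (p + 1) = xprod d.X p * d.X p from rfl]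
    have e2 : recast h0 ((xcap p h0 d.X p * Bmat p h0 d.X ^ (k - 1) * xprod d.X p) * d.X p)
        = Bmat p h0 d.X ^ (k - 1) * Bmat p h0 d.X := by
      rw [e0, recast_mul h0, sub_mul_left, xcap_last p h0 d.X, Matrix.one_mul]
      rfl
    rw [Matrix.mul_add, Matrix.mul_smul, e1, Matrix.add_mul, Matrix.smul_mul,
      recast_add h0, recast_smul h0, e2, hcB, ← h1]
    abel
  · -- phi qv2
    intro j hj
    show d.X (j + 1) * (d.Y (j + 1) + ν • (xcap p h0 d.X (j + 1)
            * Bmat p h0 d.X ^ (k - 1) * xprod d.X (j + 1)))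
        - (d.Y j + ν • (xcap p h0 d.X j * Bmat p h0 d.X ^ (k - 1) * xprod d.X j)) * d.X j
        = lam (j + 1) • 1
    have e1 : d.X (j + 1) * (xcap p h0 d.X (j + 1) * Bmat p h0 d.X ^ (k - 1)
            * xprod d.X (j + 1))
        = xcap p h0 d.X j * Bmat p h0 d.X ^ (k - 1) * xprod d.X (j + 1) := by
      rw [← Matrix.mul_assoc, ← Matrix.mul_assoc, xcap_step p h0 d.X hj]
    have e2 : (xcap p h0 d.X j * Bmat p h0 d.X ^ (k - 1) * xprod d.X j) * d.X j
        = xcap p h0 d.X j * Bmat p h0 d.X ^ (k - 1) * xprod d.X (j + 1) := by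
      rw [Matrix.mul_assoc, show xprod d.X (j + 1) = xprod d.X j * d.X j from rfl]
    rw [Matrix.mul_add, Matrix.mul_smul, e1, Matrix.add_mul, Matrix.smul_mul, e2, ← h2 j hj]
    abel
  · -- psi involution
    cases d with
    | mk X Y v w =>
      simp only [psiT, Datum.mk.injEq]
      refine ⟨funext fun i => ?_, trivial, trivial, trivial⟩
      simp [neg_smul]
  · -- phi involution
    cases d with
    | mk X Y v w =>
      simp only [phiT, Datum.mk.injEq]
      refine ⟨trivial, funext fun i => ?_, trivial, trivial⟩
      simp [neg_smul]

end
end CM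
end

section
/- Let m ≥ 2 with λ₀ ≠ 0, and let (X_j, Y_j, v, w) be a representation datum. Define linear maps μ: ℂ^{α₀} → ℂ ⊕ ℂ^{α₁} ⊕ ℂ^{α_{m−1}} by μ(t) = (w t, Y₀ t, −X_{m−1} t), and π: ℂ ⊕ ℂ^{α₁} ⊕ ℂ^{α_{m−1}} → ℂ^{α₀} by π(x, y, z) = (1/λ₀)(v x + X₀ y + Y_{m−1} z). Then π ∘ μ = Id on ℂ^{α₀}; consequently μ ∘ π is an idempotent endomorphism of ℂ ⊕ ℂ^{α₁} ⊕ ℂ^{α_{m−1}}. -/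
open Matrix

namespace CM

noncomputable section

variable {α : ℕ → ℕ}

/-- Let `m = p + 1 ≥ 2` with `λ₀ ≠ 0`, and let `(X_j, Y_j, v, w)` be a
representation datum.  The maps `μ(t) = (w t, Y₀ t, −X_{m−1} t)` and
`π(x,y,z) = (1/λ₀)(v x + X₀ y + Y_{m−1} z)` between `ℂ^{α₀}` and
`W = ℂ ⊕ ℂ^{α₁} ⊕ ℂ^{α_{m−1}}` satisfy `π ∘ μ = Id`, so `μ ∘ π` is an idempotent
endomorphism of `W`. -/
theorem statement8 (p : ℕ) (hp : 1 ≤ p) (α : ℕ → ℕ) (lam : ℕ → ℂ) (h0 : α (p + 1) = α 0)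
    (hlam : lam 0 ≠ 0) (d : Datum α) (hd : IsRepDatum p lam h0 d) :
    ∀ (Mu : (Fin (α 0) → ℂ) → ℂ × (Fin (α 1) → ℂ) × (Fin (α p) → ℂ))
      (Pi : ℂ × (Fin (α 1) → ℂ) × (Fin (α p) → ℂ) → (Fin (α 0) → ℂ)),
      Mu = (fun t => (d.w ⬝ᵥ t, d.Y 0 *ᵥ t,
              -((d.X p).submatrix id (Fin.cast h0.symm) *ᵥ t))) →
      Pi = (fun z => (lam 0)⁻¹ •
              (z.1 • d.v + d.X 0 *ᵥ z.2.1 + (d.Y p).submatrix (Fin.cast h0.symm) id *ᵥ z.2.2)) →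
      (∀ t, Pi (Mu t) = t) ∧ (∀ z, (Mu ∘ Pi) ((Mu ∘ Pi) z) = (Mu ∘ Pi) z) := by
  intro Mu Pi hMu hPi
  have key : ∀ t, Pi (Mu t) = t := by
    intro t
    subst hMu hPi
    simp only
    have h1 : (d.Y p).submatrix (Fin.cast h0.symm) id *ᵥ
        (-((d.X p).submatrix id (Fin.cast h0.symm) *ᵥ t))
        = -(recast h0 (d.Y p * d.X p) *ᵥ t) := by
      have hm : (d.Y p).submatrix (Fin.cast h0.symm) id *
          (d.X p).submatrix id (Fin.cast h0.symm) = recast h0 (d.Y p * d.X p) := by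
        have := Matrix.submatrix_mul_equiv (d.Y p) (d.X p)
          (Fin.cast h0.symm) (Equiv.refl (Fin (α p))) (Fin.cast h0.symm)
        simpa [recast] using this
      rw [Matrix.mulVec_neg, Matrix.mulVec_mulVec, hm]
    have h2 : (d.w ⬝ᵥ t) • d.v = vecMulVec d.v d.w *ᵥ t := by
      ext i
      simp [vecMulVec, Matrix.mulVec, dotProduct, Finset.mul_sum, mul_comm,
        mul_left_comm]
    have h3 : d.X 0 *ᵥ (d.Y 0 *ᵥ t) = (d.X 0 * d.Y 0) *ᵥ t := by
      rw [Matrix.mulVec_mulVec]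
    rw [h1, h2, h3]
    have : vecMulVec d.v d.w *ᵥ t + (d.X 0 * d.Y 0) *ᵥ t
        + -(recast h0 (d.Y p * d.X p) *ᵥ t)
        = (d.X 0 * d.Y 0 - recast h0 (d.Y p * d.X p) + vecMulVec d.v d.w) *ᵥ t := by
      rw [Matrix.add_mulVec, Matrix.sub_mulVec]
      abel
    rw [this, hd.1, Matrix.smul_mulVec, Matrix.one_mulVec,
      inv_smul_smul₀ hlam]
  exact ⟨key, fun z => by simp [Function.comp, key]⟩

end
end CM
end

section
/- Let m ≥ 2 with λ₀ ≠ 0, let (X_j, Y_j, v, w) be a representation datum, set W := ℂ ⊕ ℂ^{α₁} ⊕ ℂ^{α_{m−1}}, and let π: W → ℂ^{α₀} be π(x, y, z) = (1/λ₀)(v x + X₀ y + Y_{m−1} z). Define X′₀: ℂ^{α₁} → W by X′₀(u) = (w X₀ u, −λ₀ u + Y₀ X₀ u, −X_{m−1} X₀ u), Y′_{m−1}: ℂ^{α_{m−1}} → W by Y′_{m−1}(z) = (w Y_{m−1} z, Y₀ Y_{m−1} z, −λ₀ z − X_{m−1} Y_{m−1} z), and v′ := (−λ₀ + w v, Y₀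 v, −X_{m−1} v) ∈ W. Then π ∘ X′₀ = 0, π ∘ Y′_{m−1} = 0 and π(v′) = 0; i.e. the maps X′₀, Y′_{m−1}, v′ of the reflection functor R₀ take values in ker π = Im(Id − μπ). -/
open Matrix

namespace CM

noncomputable section

variable {α : ℕ → ℕ}

/-- Let `m = p + 1 ≥ 2` with `λ₀ ≠ 0` and let `(X_j, Y_j, v, w)` be a
representation datum, `W = ℂ ⊕ ℂ^{α₁} ⊕ ℂ^{α_{m−1}}`, and
`π(x,y,z) = (1/λ₀)(v x + X₀ y + Y_{m−1} z)`.  Then the reflected maps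
`X′₀(u) = (w X₀ u, −λ₀ u + Y₀ X₀ u, −X_{m−1} X₀ u)`,
`Y′_{m−1}(z) = (w Y_{m−1} z, Y₀ Y_{m−1} z, −λ₀ z − X_{m−1} Y_{m−1} z)` and
`v′ = (−λ₀ + w v, Y₀ v, −X_{m−1} v)` all take values in `ker π`. -/
theorem statement9 (p : ℕ) (hp : 1 ≤ p) (α : ℕ → ℕ) (lam : ℕ → ℂ) (h0 : α (p + 1) = α 0)
    (hlam : lam 0 ≠ 0) (d : Datum α) (hd : IsRepDatum p lam h0 d) :
    ∀ (Pi : ℂ × (Fin (α 1) → ℂ) × (Fin (α p) → ℂ) → (Fin (α 0) → ℂ))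
      (X'0 : (Fin (α 1) → ℂ) → ℂ × (Fin (α 1) → ℂ) × (Fin (α p) → ℂ))
      (Y'p : (Fin (α p) → ℂ) → ℂ × (Fin (α 1) → ℂ) × (Fin (α p) → ℂ))
      (v' : ℂ × (Fin (α 1) → ℂ) × (Fin (α p) → ℂ)),
      Pi = (fun z => (lam 0)⁻¹ •
              (z.1 • d.v + d.X 0 *ᵥ z.2.1 + (d.Y p).submatrix (Fin.cast h0.symm) id *ᵥ z.2.2)) →
      X'0 = (fun u => (d.w ⬝ᵥ (d.X 0 *ᵥ u),
              (-(lam 0)) • u + d.Y 0 *ᵥ (d.X 0 *ᵥ u),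
              -((d.X p).submatrix id (Fin.cast h0.symm) *ᵥ (d.X 0 *ᵥ u)))) →
      Y'p = (fun z => (d.w ⬝ᵥ ((d.Y p).submatrix (Fin.cast h0.symm) id *ᵥ z),
              d.Y 0 *ᵥ ((d.Y p).submatrix (Fin.cast h0.symm) id *ᵥ z),
              (-(lam 0)) • z -
                (d.X p).submatrix id (Fin.cast h0.symm) *ᵥ
                  ((d.Y p).submatrix (Fin.cast h0.symm) id *ᵥ z))) →
      v' = (-(lam 0) + d.w ⬝ᵥ d.v, d.Y 0 *ᵥ d.v,
              -((d.X p).submatrix id (Fin.cast h0.symm) *ᵥ d.v)) →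
      (∀ u, Pi (X'0 u) = 0) ∧ (∀ z, Pi (Y'p z) = 0) ∧ Pi v' = 0 := by
  intro Pi X'0 Y'p v' hPi hX hY hv
  subst hPi hX hY hv
  obtain ⟨h1, -⟩ := hd
  set Yp' := (d.Y p).submatrix (Fin.cast h0.symm) id with hYp'
  set Xp' := (d.X p).submatrix id (Fin.cast h0.symm) with hXp'
  have hrec : recast h0 (d.Y p * d.X p) = Yp' * Xp' := by
    rw [hYp', hXp', recast,
      Matrix.submatrix_mul (d.Y p) (d.X p) _ id _ Function.bijective_id]
  have hvw : ∀ t : Fin (α 0) → ℂ, vecMulVec d.v d.w *ᵥ t = (d.w ⬝ᵥ t) • d.v := by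
    intro t
    funext i
    simp only [Matrix.mulVec, vecMulVec, dotProduct, Matrix.of_apply, Pi.smul_apply,
      smul_eq_mul, Finset.mul_sum]
    rw [Finset.sum_mul]
    exact Finset.sum_congr rfl fun j _ => by ring
  have key : ∀ t : Fin (α 0) → ℂ,
      Yp' *ᵥ (Xp' *ᵥ t) = d.X 0 *ᵥ (d.Y 0 *ᵥ t) + (d.w ⬝ᵥ t) • d.v - lam 0 • t := by
    intro t
    have e := congrArg (fun M => M *ᵥ t) h1
    simp only [hrec, Matrix.sub_mulVec, Matrix.add_mulVec, Matrix.smul_mulVec,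
      Matrix.one_mulVec, hvw, ← Matrix.mulVec_mulVec] at e
    rw [← e]
    abel
  refine ⟨fun u => ?_, fun z => ?_, ?_⟩
  · refine smul_eq_zero_of_right _ ?_
    rw [Matrix.mulVec_add, Matrix.mulVec_smul, Matrix.mulVec_neg, key (d.X 0 *ᵥ u),
      neg_smul]
    abel
  · refine smul_eq_zero_of_right _ ?_
    rw [Matrix.mulVec_sub, Matrix.mulVec_smul, key (Yp' *ᵥ z), neg_smul]
    abel
  · refine smul_eq_zero_of_right _ ?_
    rw [Matrix.mulVec_neg, key d.v, add_smul, neg_smul]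
    abel

end
end CM
end

section
/- Let m ≥ 2, let (X_j, Y_j, v, w) be a representation datum, and set W := ℂ ⊕ ℂ^{α₁} ⊕ ℂ^{α_{m−1}}. Define the reflected data at vertex 0: X′₀: ℂ^{α₁} → W, u ↦ (w X₀ u, −λ₀ u + Y₀ X₀ u, −X_{m−1} X₀ u); X′_{m−1}: W → ℂ^{α_{m−1}}, (u₁,u₂,u₃) ↦ −u₃; Y′_{m−1}: ℂ^{α_{m−1}} → W, z ↦ (w Y_{m−1} z, Y₀ Y_{m−1} z, −λ₀ z − X_{m−1} Y_{m−1} z); Y′₀: W → ℂ^{α₁}, (u₁,u₂,u₃) ↦ u₂; v′ := (−λ₀ + w v, Y₀ v, −X_{m−1} v) ∈ W; w′: W → ℂ, (u₁,u₂,u₃) ↦ u₁; and X′_j := X_j, Y′_j := Y_j for j ≠ 0, m−1. Set A′ := Y′_{m−1} ∘ Y_{m−2} ∘ ⋯ ∘ Y₁ ∘ Y′₀ : W → W, B′ := X′₀ ∘ X₁ ∘ ⋯ ∘ X_{m−2} ∘ X′_{m−1} : W → W, C′₀ := Id_W and C′_k := Y′_{m−1} ∘ Y_{m−2} ∘ ⋯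 ∘ Y_{m−k} ∘ X_{m−k} ∘ ⋯ ∘ X_{m−2} ∘ X′_{m−1} for 1 ≤ k ≤ m−1, and H′^{i,j}_k := w′(A′^i C′_k B′^j v′). Then H′^{i,j}_k = H^{i,j}_k for every 1 ≤ k ≤ m−1 and all i, j ≥ 0, and H′^{i,j}_0 = H^{i,j}_0 − λ₀·H^{i−1,j−1}_{m−1} for all i, j ≥ 1. -/
open Matrix

namespace CM

noncomputable section

variable {α : ℕ → ℕ}

section Reflection

/-- `X_{m−1}` viewed as a matrix from the vertex `0` to the vertex `m − 1 = p`. -/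
def Xwrap (p : ℕ) (h0 : α (p + 1) = α 0) (d : Datum α) : Matrix (Fin (α p)) (Fin (α 0)) ℂ :=
  (d.X p).submatrix id (Fin.cast h0.symm)

/-- `Y_{m−1}` viewed as a matrix from the vertex `m − 1 = p` to the vertex `0`. -/
def Ywrap (p : ℕ) (h0 : α (p + 1) = α 0) (d : Datum α) : Matrix (Fin (α 0)) (Fin (α p)) ℂ :=
  (d.Y p).submatrix (Fin.cast h0.symm) id

/-- The reflected `X′₀ : ℂ^{α₁} → W = ℂ ⊕ ℂ^{α₁} ⊕ ℂ^{α_{m−1}}`,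
`u ↦ (w X₀ u, −λ₀ u + Y₀ X₀ u, −X_{m−1} X₀ u)`. -/
def refX0 (p : ℕ) (lam : ℕ → ℂ) (h0 : α (p + 1) = α 0) (d : Datum α) :
    (Fin (α 1) → ℂ) → ℂ × (Fin (α 1) → ℂ) × (Fin (α p) → ℂ) :=
  fun u => (d.w ⬝ᵥ (d.X 0 *ᵥ u),
            (-(lam 0)) • u + d.Y 0 *ᵥ (d.X 0 *ᵥ u),
            -(Xwrap p h0 d *ᵥ (d.X 0 *ᵥ u)))

/-- The reflected `Y′_{m−1} : ℂ^{α_{m−1}} → W`,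
`z ↦ (w Y_{m−1} z, Y₀ Y_{m−1} z, −λ₀ z − X_{m−1} Y_{m−1} z)`. -/
def refYp (p : ℕ) (lam : ℕ → ℂ) (h0 : α (p + 1) = α 0) (d : Datum α) :
    (Fin (α p) → ℂ) → ℂ × (Fin (α 1) → ℂ) × (Fin (α p) → ℂ) :=
  fun z => (d.w ⬝ᵥ (Ywrap p h0 d *ᵥ z),
            d.Y 0 *ᵥ (Ywrap p h0 d *ᵥ z),
            (-(lam 0)) • z - Xwrap p h0 d *ᵥ (Ywrap p h0 d *ᵥ z))

/-- The reflected vector `v′ = (−λ₀ + w v, Y₀ v, −X_{m−1} v) ∈ W`. -/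
def refv (p : ℕ) (lam : ℕ → ℂ) (h0 : α (p + 1) = α 0) (d : Datum α) :
    ℂ × (Fin (α 1) → ℂ) × (Fin (α p) → ℂ) :=
  (-(lam 0) + d.w ⬝ᵥ d.v, d.Y 0 *ᵥ d.v, -(Xwrap p h0 d *ᵥ d.v))

/-- `Y_{m−2} ⋯ Y₁` as a matrix from the vertex `1` to the vertex `m − 1 = p`. -/
def midY (p : ℕ) (hp : 1 ≤ p) (d : Datum α) : Matrix (Fin (α p)) (Fin (α 1)) ℂ :=
  (ysegFrom d.Y 1 (p - 1)).submatrix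
    (Fin.cast (congrArg α (by omega : p = 1 + (p - 1)))) id

/-- `X₁ ⋯ X_{m−2}` as a matrix from the vertex `m − 1 = p` to the vertex `1`. -/
def midX (p : ℕ) (hp : 1 ≤ p) (d : Datum α) : Matrix (Fin (α 1)) (Fin (α p)) ℂ :=
  (xsegFrom d.X 1 (p - 1)).submatrix id
    (Fin.cast (congrArg α (by omega : p = 1 + (p - 1))))

/-- `A′ = Y′_{m−1} ∘ Y_{m−2} ∘ ⋯ ∘ Y₁ ∘ Y′₀ : W → W` (recall `Y′₀(u₁,u₂,u₃) = u₂`). -/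
def refA (p : ℕ) (hp : 1 ≤ p) (lam : ℕ → ℂ) (h0 : α (p + 1) = α 0) (d : Datum α) :
    ℂ × (Fin (α 1) → ℂ) × (Fin (α p) → ℂ) → ℂ × (Fin (α 1) → ℂ) × (Fin (α p) → ℂ) :=
  fun z => refYp p lam h0 d (midY p hp d *ᵥ z.2.1)

/-- `B′ = X′₀ ∘ X₁ ∘ ⋯ ∘ X_{m−2} ∘ X′_{m−1} : W → W` (recall `X′_{m−1}(u₁,u₂,u₃) = −u₃`). -/
def refB (p : ℕ) (hp : 1 ≤ p) (lam : ℕ → ℂ) (h0 : α (p + 1) = α 0) (d : Datum α) :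
    ℂ × (Fin (α 1) → ℂ) × (Fin (α p) → ℂ) → ℂ × (Fin (α 1) → ℂ) × (Fin (α p) → ℂ) :=
  fun z => refX0 p lam h0 d (midX p hp d *ᵥ (-z.2.2))

/-- `C′₀ = Id_W` and, for `1 ≤ k ≤ m − 1`,
`C′_k = Y′_{m−1} ∘ Y_{m−2} ∘ ⋯ ∘ Y_{m−k} ∘ X_{m−k} ∘ ⋯ ∘ X_{m−2} ∘ X′_{m−1} : W → W`. -/
def refC (p : ℕ) (lam : ℕ → ℂ) (h0 : α (p + 1) = α 0) (d : Datum α) (k : ℕ) :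
    ℂ × (Fin (α 1) → ℂ) × (Fin (α p) → ℂ) → ℂ × (Fin (α 1) → ℂ) × (Fin (α p) → ℂ) :=
  if h : 1 ≤ k ∧ k ≤ p then
    fun z => refYp p lam h0 d
      ((ysegFrom d.Y (p + 1 - k) (k - 1)).submatrix
          (Fin.cast (congrArg α (by omega : p = p + 1 - k + (k - 1)))) id *ᵥ
        ((xsegFrom d.X (p + 1 - k) (k - 1)).submatrix id
            (Fin.cast (congrArg α (by omega : p = p + 1 - k + (k - 1)))) *ᵥ (-z.2.2)))
  else id

/-- `H′^{i,j}_k = w′(A′^i C′_k B′^j v′)`, where `w′(u₁,u₂,u₃) = u₁`. -/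
def Hprime (p : ℕ) (hp : 1 ≤ p) (lam : ℕ → ℂ) (h0 : α (p + 1) = α 0) (d : Datum α)
    (i j k : ℕ) : ℂ :=
  ((refA p hp lam h0 d)^[i]
    (refC p lam h0 d k ((refB p hp lam h0 d)^[j] (refv p lam h0 d)))).1

/-- `H^{i,j}_k = w·A^i C_k B^j·v`. -/
def Hfun (p : ℕ) (h0 : α (p + 1) = α 0) (d : Datum α) (i j k : ℕ) : ℂ :=
  d.w ⬝ᵥ ((Amat p h0 d.Y ^ i * Cmat p h0 d.X d.Y k * Bmat p h0 d.X ^ j) *ᵥ d.v)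

-- helper section, to be inserted before the theorem
section Helpers

def colCast {m : Type*} {a b : ℕ} (h : a = b) (M : Matrix m (Fin a) ℂ) : Matrix m (Fin b) ℂ :=
  M.submatrix id (Fin.cast h.symm)

def rowCast {m : Type*} {a b : ℕ} (h : a = b) (M : Matrix (Fin a) m ℂ) : Matrix (Fin b) m ℂ :=
  M.submatrix (Fin.cast h.symm) id

lemma mul_colCast {m n : Type*} [Fintype n] {a b : ℕ} (h : a = b) (M : Matrix m n ℂ)
    (N : Matrix n (Fin a) ℂ) : M * colCast h N = colCast h (M * N) := rfl

lemma rowCast_mul {m n : Type*} [Fintype m] {a b : ℕ} (h : a = b) (M : Matrix (Fin a) m ℂ)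
    (N : Matrix m n ℂ) : rowCast h M * N = rowCast h (M * N) := rfl

lemma colCast_mul {n : Type*} {m : Type*} [Fintype n] {a b : ℕ} (h : a = b)
    (M : Matrix m (Fin a) ℂ) (N : Matrix (Fin b) n ℂ) :
    colCast h M * N = M * rowCast h.symm N := by subst h; rfl

lemma mul_rowCast {m n : Type*} {a b : ℕ} (h : a = b) (M : Matrix m (Fin b) ℂ)
    (N : Matrix (Fin a) n ℂ) : M * rowCast h N = colCast h.symm M * N := by subst h; rfl

lemma xfam_congr (X : ∀ i : ℕ, Matrix (Fin (α i)) (Fin (α (i + 1))) ℂ) {n n' : ℕ} (h : n = n') :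
    X n' = rowCast (congrArg α h) (colCast (congrArg α (congrArg (· + 1) h)) (X n)) := by
  subst h; rfl

lemma yfam_congr (Y : ∀ i : ℕ, Matrix (Fin (α (i + 1))) (Fin (α i)) ℂ) {n n' : ℕ} (h : n = n') :
    Y n' = rowCast (congrArg α (congrArg (· + 1) h)) (colCast (congrArg α h) (Y n)) := by
  subst h; rfl

lemma xseg_congr (X : ∀ i : ℕ, Matrix (Fin (α i)) (Fin (α (i + 1))) ℂ) {n n' : ℕ} (h : n = n')
    (k : ℕ) : xsegFrom X n' k
      = rowCast (congrArg α h) (colCast (congrArg α (congrArg (· + k) h)) (xsegFrom X n k)) := by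
  subst h; rfl

lemma yseg_congr (Y : ∀ i : ℕ, Matrix (Fin (α (i + 1))) (Fin (α i)) ℂ) {n n' : ℕ} (h : n = n')
    (k : ℕ) : ysegFrom Y n' k
      = rowCast (congrArg α (congrArg (· + k) h)) (colCast (congrArg α h) (ysegFrom Y n k)) := by
  subst h; rfl

lemma recast_one {a b : ℕ} (h : a = b) : recast h (1 : Matrix (Fin a) (Fin a) ℂ) = 1 := by
  subst h; rfl

lemma xprod_succ (X : ∀ i : ℕ, Matrix (Fin (α i)) (Fin (α (i + 1))) ℂ) (q : ℕ) :
    xprod X (q + 1) = X 0 * colCast (congrArg α (Nat.add_comm 1 q)) (xsegFrom X 1 q) := by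
  induction q with
  | zero =>
    show (1 : Matrix (Fin (α 0)) (Fin (α 0)) ℂ) * X 0
        = X 0 * colCast _ (1 : Matrix (Fin (α 1)) (Fin (α 1)) ℂ)
    rw [Matrix.one_mul]
    exact (Matrix.mul_one _).symm
  | succ q ih =>
    show xprod X (q + 1) * X (q + 1) = _
    rw [ih, Matrix.mul_assoc]
    congr 1
    show colCast (congrArg α (Nat.add_comm 1 q)) (xsegFrom X 1 q) * X (q + 1)
        = colCast (congrArg α (Nat.add_comm 1 (q+1))) (xsegFrom X 1 q * X (1 + q))
    rw [colCast_mul, xfam_congr X (Nat.add_comm q 1)]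
    rfl

lemma yprod_succ (Y : ∀ i : ℕ, Matrix (Fin (α (i + 1))) (Fin (α i)) ℂ) (q : ℕ) :
    yprod Y (q + 1) = rowCast (congrArg α (Nat.add_comm 1 q)) (ysegFrom Y 1 q) * Y 0 := by
  induction q with
  | zero =>
    show Y 0 * (1 : Matrix (Fin (α 0)) (Fin (α 0)) ℂ)
        = rowCast _ (1 : Matrix (Fin (α 1)) (Fin (α 1)) ℂ) * Y 0
    rw [Matrix.mul_one]
    exact (Matrix.one_mul _).symm
  | succ q ih =>
    show Y (q + 1) * yprod Y (q + 1) = _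
    rw [ih, ← Matrix.mul_assoc]
    congr 1
    show Y (q + 1) * rowCast (congrArg α (Nat.add_comm 1 q)) (ysegFrom Y 1 q)
        = rowCast (congrArg α (Nat.add_comm 1 (q+1))) (Y (1 + q) * ysegFrom Y 1 q)
    rw [mul_rowCast, yfam_congr Y (Nat.add_comm q 1)]
    rfl

end Helpers

section Mats

variable (p : ℕ) (hp : 1 ≤ p) (h0 : α (p + 1) = α 0) (d : Datum α)

lemma matB : d.X 0 * (midX p hp d * Xwrap p h0 d) = Bmat p h0 d.X := by
  obtain ⟨q, rfl⟩ := Nat.exists_eq_succ_of_ne_zero (Nat.one_le_iff_ne_zero.mp hp)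
  show d.X 0 * (colCast (congrArg α (Nat.add_comm 1 q)) (xsegFrom d.X 1 q)
      * colCast h0 (d.X (q + 1))) = colCast h0 (xprod d.X (q + 1 + 1))
  rw [xprod_succ, colCast_mul]
  show d.X 0 * (xsegFrom d.X 1 q * rowCast (congrArg α (Nat.add_comm 1 q)).symm
      (colCast h0 (d.X (q + 1))))
    = colCast h0 (d.X 0 * colCast (congrArg α (Nat.add_comm 1 (q+1)))
      (xsegFrom d.X 1 q * d.X (1 + q)))
  rw [xfam_congr d.X (Nat.add_comm q 1)]
  rfl

lemma matA : Ywrap p h0 d * (midY p hp d * d.Y 0) = Amat p h0 d.Y := by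
  obtain ⟨q, rfl⟩ := Nat.exists_eq_succ_of_ne_zero (Nat.one_le_iff_ne_zero.mp hp)
  show rowCast h0 (d.Y (q + 1)) * (rowCast (congrArg α (Nat.add_comm 1 q)) (ysegFrom d.Y 1 q)
      * d.Y 0) = rowCast h0 (yprod d.Y (q + 1 + 1))
  rw [yprod_succ, ← Matrix.mul_assoc, mul_rowCast]
  show (colCast (congrArg α (Nat.add_comm 1 q)).symm (rowCast h0 (d.Y (q + 1)))
      * ysegFrom d.Y 1 q) * d.Y 0
    = rowCast h0 ((rowCast (congrArg α (Nat.add_comm 1 (q+1))) (d.Y (1 + q) * ysegFrom d.Y 1 q))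
      * d.Y 0)
  rw [yfam_congr d.Y (Nat.add_comm q 1)]
  rfl

lemma matC_gen (b s : ℕ) (hb : b + s = p) :
    Ywrap p h0 d * (rowCast (congrArg α hb) (ysegFrom d.Y b s) *
      (colCast (congrArg α hb) (xsegFrom d.X b s) * Xwrap p h0 d))
      = recast ((congrArg α (show b + (s+1) = p+1 by omega)).trans h0)
          (ysegFrom d.Y b (s+1) * xsegFrom d.X b (s+1)) := by
  subst hb
  show rowCast h0 (d.Y (b + s)) * (rowCast (congrArg α rfl) (ysegFrom d.Y b s) *
      (colCast (congrArg α rfl) (xsegFrom d.X b s) * colCast h0 (d.X (b + s)))) = _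
  exact (congrArg (rowCast h0) (Matrix.mul_assoc (d.Y (b+s)) (ysegFrom d.Y b s)
    (xsegFrom d.X b s * colCast h0 (d.X (b+s))))).symm

lemma matC (s : ℕ) (hs : s + 1 ≤ p) :
    Ywrap p h0 d * (rowCast (congrArg α (show (p+1-(s+1)) + s = p by omega))
        (ysegFrom d.Y (p+1-(s+1)) s) *
      (colCast (congrArg α (show (p+1-(s+1)) + s = p by omega))
        (xsegFrom d.X (p+1-(s+1)) s) * Xwrap p h0 d))
      = Cmat p h0 d.X d.Y (s+1) := by
  rw [Cmat, dif_pos (show s + 1 ≤ p + 1 by omega)]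
  exact matC_gen p h0 d (p+1-(s+1)) s (by omega)

lemma Cmat_p :
    Cmat p h0 d.X d.Y p
      = recast ((congrArg α (show 1 + (p-1+1) = p+1 by omega)).trans h0)
          (ysegFrom d.Y 1 (p-1+1) * xsegFrom d.X 1 (p-1+1)) := by
  obtain ⟨q, rfl⟩ := Nat.exists_eq_succ_of_ne_zero (Nat.one_le_iff_ne_zero.mp hp)
  rw [Cmat, dif_pos (show q + 1 ≤ q + 1 + 1 by omega)]
  rw [yseg_congr d.Y (show (1:ℕ) = q + 1 + 1 - (q + 1) by omega) (q + 1),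
      xseg_congr d.X (show (1:ℕ) = q + 1 + 1 - (q + 1) by omega) (q + 1)]
  rw [rowCast_mul, colCast_mul]
  rfl

lemma matCp :
    Ywrap p h0 d * (midY p hp d * (midX p hp d * Xwrap p h0 d)) = Cmat p h0 d.X d.Y p := by
  rw [Cmat_p p hp h0 d]
  exact matC_gen p h0 d 1 (p-1) (by omega)

lemma Cmat_zero : Cmat p h0 d.X d.Y 0 = 1 := by
  rw [Cmat, dif_pos (Nat.zero_le _)]
  simp only [ysegFrom, xsegFrom, Matrix.one_mul]
  exact recast_one _

lemma vecB (t : Fin (α 0) → ℂ) :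
    d.X 0 *ᵥ (midX p hp d *ᵥ (Xwrap p h0 d *ᵥ t)) = Bmat p h0 d.X *ᵥ t := by
  simp only [Matrix.mulVec_mulVec]
  exact congrArg (· *ᵥ t) (matB p hp h0 d)

lemma vecA (t : Fin (α 0) → ℂ) :
    Ywrap p h0 d *ᵥ (midY p hp d *ᵥ (d.Y 0 *ᵥ t)) = Amat p h0 d.Y *ᵥ t := by
  simp only [Matrix.mulVec_mulVec]
  exact congrArg (· *ᵥ t) (matA p hp h0 d)

lemma vecCp (t : Fin (α 0) → ℂ) :
    Ywrap p h0 d *ᵥ (midY p hp d *ᵥ (midX p hp d *ᵥ (Xwrap p h0 d *ᵥ t)))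
      = Cmat p h0 d.X d.Y p *ᵥ t := by
  simp only [Matrix.mulVec_mulVec]
  exact congrArg (· *ᵥ t) (matCp p hp h0 d)

end Mats

section Dyn

variable (p : ℕ) (hp : 1 ≤ p) (lam : ℕ → ℂ) (h0 : α (p + 1) = α 0) (d : Datum α)

lemma powVec {n : ℕ} (M : Matrix (Fin n) (Fin n) ℂ) (k : ℕ) (v : Fin n → ℂ) :
    M *ᵥ (M ^ k *ᵥ v) = M ^ (k+1) *ᵥ v := by
  rw [Matrix.mulVec_mulVec, ← pow_succ']

lemma powVec' {n : ℕ} (M : Matrix (Fin n) (Fin n) ℂ) (k : ℕ) (v : Fin n → ℂ) :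
    M ^ k *ᵥ (M *ᵥ v) = M ^ (k+1) *ᵥ v := by
  rw [Matrix.mulVec_mulVec, ← pow_succ]

lemma iterB3 (j : ℕ) :
    ((refB p hp lam h0 d)^[j] (refv p lam h0 d)).2.2
      = -(Xwrap p h0 d *ᵥ (Bmat p h0 d.X ^ j *ᵥ d.v)) := by
  induction j with
  | zero => simp [refv, Matrix.one_mulVec]
  | succ n ih =>
    rw [Function.iterate_succ_apply']
    simp only [refB, refX0]
    rw [ih, neg_neg, vecB p hp h0 d, powVec]

lemma iterB_succ (n : ℕ) :
    (refB p hp lam h0 d)^[n+1] (refv p lam h0 d)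
      = (d.w ⬝ᵥ (Bmat p h0 d.X ^ (n+1) *ᵥ d.v),
         (-(lam 0)) • (midX p hp d *ᵥ (Xwrap p h0 d *ᵥ (Bmat p h0 d.X ^ n *ᵥ d.v)))
           + d.Y 0 *ᵥ (Bmat p h0 d.X ^ (n+1) *ᵥ d.v),
         -(Xwrap p h0 d *ᵥ (Bmat p h0 d.X ^ (n+1) *ᵥ d.v))) := by
  rw [Function.iterate_succ_apply']
  simp only [refB, refX0]
  rw [iterB3 p hp lam h0 d n, neg_neg, vecB p hp h0 d, powVec]

lemma refC_fst (s : ℕ) (hs : s + 1 ≤ p) (z : ℂ × (Fin (α 1) → ℂ) × (Fin (α p) → ℂ))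
    (t : Fin (α 0) → ℂ) (hz : z.2.2 = -(Xwrap p h0 d *ᵥ t)) :
    (refC p lam h0 d (s+1) z).1 = d.w ⬝ᵥ (Cmat p h0 d.X d.Y (s+1) *ᵥ t) := by
  rw [refC, dif_pos (show 1 ≤ s + 1 ∧ s + 1 ≤ p from ⟨Nat.succ_le_succ (Nat.zero_le _), hs⟩)]
  simp only [refYp]
  rw [hz, neg_neg]
  simp only [Matrix.mulVec_mulVec]
  exact congrArg (fun M => d.w ⬝ᵥ (M *ᵥ t)) (matC p h0 d s hs)

lemma refC_snd (s : ℕ) (hs : s + 1 ≤ p) (z : ℂ × (Fin (α 1) → ℂ) × (Fin (α p) → ℂ))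
    (t : Fin (α 0) → ℂ) (hz : z.2.2 = -(Xwrap p h0 d *ᵥ t)) :
    (refC p lam h0 d (s+1) z).2.1 = d.Y 0 *ᵥ (Cmat p h0 d.X d.Y (s+1) *ᵥ t) := by
  rw [refC, dif_pos (show 1 ≤ s + 1 ∧ s + 1 ≤ p from ⟨Nat.succ_le_succ (Nat.zero_le _), hs⟩)]
  simp only [refYp]
  rw [hz, neg_neg]
  simp only [Matrix.mulVec_mulVec]
  exact congrArg (fun M => (d.Y 0 * M) *ᵥ t) (matC p h0 d s hs)

lemma iterA (i : ℕ) (y : Fin (α 0) → ℂ) (z : ℂ × (Fin (α 1) → ℂ) × (Fin (α p) → ℂ))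
    (h1 : z.1 = d.w ⬝ᵥ y) (h2 : z.2.1 = d.Y 0 *ᵥ y) :
    ((refA p hp lam h0 d)^[i] z).1 = d.w ⬝ᵥ (Amat p h0 d.Y ^ i *ᵥ y) ∧
    ((refA p hp lam h0 d)^[i] z).2.1 = d.Y 0 *ᵥ (Amat p h0 d.Y ^ i *ᵥ y) := by
  induction i generalizing y z with
  | zero => simpa [Matrix.one_mulVec] using ⟨h1, h2⟩
  | succ n ih =>
    have h1' : (refA p hp lam h0 d z).1 = d.w ⬝ᵥ (Amat p h0 d.Y *ᵥ y) := by
      simp only [refA, refYp]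
      rw [h2, vecA p hp h0 d]
    have h2' : (refA p hp lam h0 d z).2.1 = d.Y 0 *ᵥ (Amat p h0 d.Y *ᵥ y) := by
      simp only [refA, refYp]
      rw [h2, vecA p hp h0 d]
    obtain ⟨g1, g2⟩ := ih (Amat p h0 d.Y *ᵥ y) (refA p hp lam h0 d z) h1' h2'
    rw [Function.iterate_succ_apply]
    constructor
    · rw [g1, powVec']
    · rw [g2, powVec']

end Dyn

/-- For a representation datum with `m = p + 1 ≥ 2`, the generating
functions of the data reflected at the vertex `0` satisfy `H′^{i,j}_k = H^{i,j}_k` for all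
`1 ≤ k ≤ m − 1` and all `i, j ≥ 0`, and
`H′^{i,j}_0 = H^{i,j}_0 − λ₀·H^{i−1,j−1}_{m−1}` for all `i, j ≥ 1`. -/
theorem statement10 (p : ℕ) (hp : 1 ≤ p) (α : ℕ → ℕ) (lam : ℕ → ℂ)
    (h0 : α (p + 1) = α 0) (d : Datum α) (hd : IsRepDatum p lam h0 d) :
    (∀ k : ℕ, 1 ≤ k → k ≤ p → ∀ i j : ℕ,
        Hprime p hp lam h0 d i j k = Hfun p h0 d i j k) ∧
    (∀ i j : ℕ, 1 ≤ i → 1 ≤ j →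
        Hprime p hp lam h0 d i j 0
          = Hfun p h0 d i j 0 - lam 0 * Hfun p h0 d (i - 1) (j - 1) p) := by
  clear hd
  constructor
  · intro k hk1 hk2 i j
    obtain ⟨s, rfl⟩ := Nat.exists_eq_succ_of_ne_zero (Nat.one_le_iff_ne_zero.mp hk1)
    have hz := iterB3 p hp lam h0 d j
    have h1 := refC_fst p lam h0 d s hk2 _ _ hz
    have h2 := refC_snd p lam h0 d s hk2 _ _ hz
    obtain ⟨g1, -⟩ := iterA p hp lam h0 d i _ _ h1 h2
    simp only [Hprime, Hfun]
    rw [g1]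
    simp only [Matrix.mulVec_mulVec]
    rw [← Matrix.mul_assoc]
  · intro i j hi hj
    obtain ⟨m, rfl⟩ := Nat.exists_eq_succ_of_ne_zero (Nat.one_le_iff_ne_zero.mp hi)
    obtain ⟨n, rfl⟩ := Nat.exists_eq_succ_of_ne_zero (Nat.one_le_iff_ne_zero.mp hj)
    have hC0 : refC p lam h0 d 0 = id := by
      rw [refC, dif_neg (by simp)]
    have h1 : (refA p hp lam h0 d ((refB p hp lam h0 d)^[n+1] (refv p lam h0 d))).1
        = d.w ⬝ᵥ ((-(lam 0)) • (Cmat p h0 d.X d.Y p *ᵥ (Bmat p h0 d.X ^ n *ᵥ d.v))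
            + Amat p h0 d.Y *ᵥ (Bmat p h0 d.X ^ (n+1) *ᵥ d.v)) := by
      rw [iterB_succ p hp lam h0 d n]
      simp only [refA, refYp]
      simp only [Matrix.mulVec_add, Matrix.mulVec_smul]
      rw [vecA p hp h0 d, vecCp p hp h0 d]
    have h2 : (refA p hp lam h0 d ((refB p hp lam h0 d)^[n+1] (refv p lam h0 d))).2.1
        = d.Y 0 *ᵥ ((-(lam 0)) • (Cmat p h0 d.X d.Y p *ᵥ (Bmat p h0 d.X ^ n *ᵥ d.v))
            + Amat p h0 d.Y *ᵥ (Bmat p h0 d.X ^ (n+1) *ᵥ d.v)) := by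
      rw [iterB_succ p hp lam h0 d n]
      simp only [refA, refYp]
      simp only [Matrix.mulVec_add, Matrix.mulVec_smul]
      rw [vecA p hp h0 d, vecCp p hp h0 d]
    obtain ⟨g1, -⟩ := iterA p hp lam h0 d m _ _ h1 h2
    simp only [Hprime, hC0, id_eq]
    rw [Function.iterate_succ_apply (refA p hp lam h0 d) m, g1]
    simp only [Matrix.mulVec_add, Matrix.mulVec_smul, dotProduct_add, dotProduct_smul,
      smul_eq_mul]
    rw [powVec']
    simp only [Matrix.mulVec_mulVec]
    simp only [Hfun, Cmat_zero p h0 d, Matrix.mul_one, Nat.succ_sub_one, Nat.add_sub_cancel,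
      Matrix.mul_assoc]
    ring

end Reflection

end
end CM
end

section
/- Let m ≥ 1 and let (X_j, Y_j, v, w) be a representation datum. Then for every integer j ≥ 1, w·B^j·v = (λ₀ + λ₁ + ⋯ + λ_{m−1})·Tr(B^j), where B = X₀X₁⋯X_{m−1}. -/
open Matrix

namespace CM

noncomputable section

variable {α : ℕ → ℕ}

def mcast {a b a' b' : ℕ} (h1 : a = a') (h2 : b = b') (M : Matrix (Fin a) (Fin b) ℂ) :
    Matrix (Fin a') (Fin b') ℂ :=
  M.submatrix (Fin.cast h1.symm) (Fin.cast h2.symm)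

lemma mcast_id {a b : ℕ} (h1 : a = a) (h2 : b = b) (M : Matrix (Fin a) (Fin b) ℂ) :
    mcast h1 h2 M = M := rfl

lemma mcast_mcast {a b a' b' a'' b'' : ℕ} (h1 : a' = a'') (h2 : b' = b'')
    (g1 : a = a') (g2 : b = b') (M : Matrix (Fin a) (Fin b) ℂ) :
    mcast h1 h2 (mcast g1 g2 M) = mcast (g1.trans h1) (g2.trans h2) M := rfl

lemma mcast_mul {a b c a' b' c' : ℕ} (h1 : a = a') (h2 h2' : b = b') (h3 : c = c')
    (M : Matrix (Fin a) (Fin b) ℂ) (N : Matrix (Fin b) (Fin c) ℂ) :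
    mcast h1 h2 M * mcast h2' h3 N = mcast h1 h3 (M * N) := by
  subst h1; subst h2; subst h3; rw [mcast_id, mcast_id, mcast_id]

lemma mul_mcast {a b c c' : ℕ} (h3 : c = c')
    (M : Matrix (Fin a) (Fin b) ℂ) (N : Matrix (Fin b) (Fin c) ℂ) :
    M * mcast rfl h3 N = mcast rfl h3 (M * N) := by
  subst h3; rw [mcast_id, mcast_id]

variable (X : ∀ i : ℕ, Matrix (Fin (α i)) (Fin (α (i + 1))) ℂ)

lemma X_congr {i i' : ℕ} (h : i' = i) :
    X i = mcast (congrArg α h) (congrArg α (by rw [h])) (X i') := by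
  subst h; rw [mcast_id]

lemma xseg_congr_s12 (i : ℕ) {r r' : ℕ} (h : r = r') :
    xsegFrom X i r = mcast rfl (congrArg α (by omega : i + r' = i + r)) (xsegFrom X i r') := by
  subst h; rw [mcast_id]

lemma xseg_peel (i r : ℕ) :
    xsegFrom X i (r + 1)
      = mcast rfl (congrArg α (by omega : (i + 1) + r = i + (r + 1)))
          (X i * xsegFrom X (i + 1) r) := by
  induction r with
  | zero =>
    have h1 : X i * xsegFrom X (i+1) 0 = X i := Matrix.mul_one (X i)
    rw [h1]
    have h2 : xsegFrom X i (0+1) = (1 : Matrix (Fin (α i)) (Fin (α i)) ℂ) * X i := rfl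
    rw [h2, Matrix.one_mul]
    rfl
  | succ r ih =>
    show xsegFrom X i (r + 1) * X (i + (r + 1)) = _
    rw [ih, X_congr X (show i + 1 + r = i + (r + 1) by omega),
        mcast_mul rfl (congrArg α (by omega)) (congrArg α (by omega)) (congrArg α (by omega)),
        Matrix.mul_assoc]
    rfl

variable (p : ℕ) (h0 : α (p + 1) = α 0)

def Qk (k : ℕ) : Matrix (Fin (α k)) (Fin (α 0)) ℂ :=
  if h : k ≤ p + 1 then
    mcast rfl ((congrArg α (by omega : k + (p + 1 - k) = p + 1)).trans h0)
      (xsegFrom X k (p + 1 - k))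
  else 0

lemma Qk_top : Qk X p h0 (p + 1) = mcast rfl h0 (1 : Matrix (Fin (α (p+1))) (Fin (α (p+1))) ℂ) := by
  rw [Qk, dif_pos le_rfl, xseg_congr_s12 X (p+1) (show p+1-(p+1) = 0 by omega), mcast_mcast]
  rfl

lemma Qk_succ {k : ℕ} (hk : k ≤ p) : Qk X p h0 k = X k * Qk X p h0 (k + 1) := by
  rw [Qk, dif_pos (by omega), Qk, dif_pos (by omega),
      xseg_congr_s12 X k (show p+1-k = (p-k)+1 by omega), xseg_peel X k (p-k),
      xseg_congr_s12 X (k+1) (show p+1-(k+1) = p-k by omega),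
      mcast_mcast, mcast_mcast, mcast_mcast, mul_mcast]

lemma PQ : ∀ dd k, k + dd = p + 1 → xprod X k * Qk X p h0 k = Bmat p h0 X := by
  intro dd
  induction dd with
  | zero =>
    intro k hk
    obtain rfl : k = p + 1 := by omega
    rw [Qk_top, mul_mcast, Matrix.mul_one]
    rfl
  | succ dd ih =>
    intro k hk
    rw [Qk_succ X p h0 (show k ≤ p by omega), ← Matrix.mul_assoc,
        show xprod X k * X k = xprod X (k+1) from rfl]
    exact ih (k+1) (by omega)

lemma pow_shuttle {a b : ℕ} (M : Matrix (Fin a) (Fin b) ℂ) (N : Matrix (Fin b) (Fin a) ℂ) :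
    ∀ j : ℕ, (M * N) ^ j * M = M * (N * M) ^ j := by
  intro j
  induction j with
  | zero => rw [pow_zero, pow_zero, Matrix.one_mul, Matrix.mul_one]
  | succ j ih =>
    rw [pow_succ, pow_succ, Matrix.mul_assoc ((M*N)^j) (M*N) M, Matrix.mul_assoc M N M,
        ← Matrix.mul_assoc ((M*N)^j) M (N*M), ih, Matrix.mul_assoc]

lemma trace_pow_flip {a b : ℕ} (M : Matrix (Fin a) (Fin b) ℂ) (N : Matrix (Fin b) (Fin a) ℂ)
    {j : ℕ} (hj : 1 ≤ j) : ((M * N) ^ j).trace = ((N * M) ^ j).trace := by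
  obtain ⟨i, rfl⟩ : ∃ i, j = i + 1 := ⟨j - 1, by omega⟩
  rw [pow_succ, ← Matrix.mul_assoc, Matrix.trace_mul_comm, pow_shuttle, ← Matrix.mul_assoc,
      ← pow_succ']

lemma trace_mul_vecMulVec {n : ℕ} (M : Matrix (Fin n) (Fin n) ℂ) (v w : Fin n → ℂ) :
    (M * vecMulVec v w).trace = w ⬝ᵥ (M *ᵥ v) := by
  simp only [Matrix.trace, Matrix.diag_apply, Matrix.mul_apply, vecMulVec_apply,
    dotProduct, Matrix.mulVec]
  refine Finset.sum_congr rfl fun i _ => ?_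
  rw [Finset.mul_sum]
  exact Finset.sum_congr rfl fun x _ => by ring

variable (Y : ∀ i : ℕ, Matrix (Fin (α (i + 1))) (Fin (α i)) ℂ)

lemma u_formula (lam : ℕ → ℂ)
    (hd2 : ∀ t : ℕ, t < p → X (t+1) * Y (t+1) - Y t * X t = lam (t+1) • 1)
    {j : ℕ} (hj : 1 ≤ j) :
    ∀ k, k ≤ p → ((Qk X p h0 k * xprod X k) ^ j * (X k * Y k)).trace
      = ((Bmat p h0 X ^ j) * (X 0 * Y 0)).trace
        + (∑ t ∈ Finset.range k, lam (t+1)) * (Bmat p h0 X ^ j).trace := by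
  intro k
  induction k with
  | zero =>
    intro _
    have hq : Qk X p h0 0 = Bmat p h0 X := by
      have := PQ X p h0 (p+1) 0 (by omega)
      rwa [show xprod X 0 = (1 : Matrix (Fin (α 0)) (Fin (α 0)) ℂ) from rfl,
        Matrix.one_mul] at this
    rw [hq, show xprod X 0 = (1 : Matrix (Fin (α 0)) (Fin (α 0)) ℂ) from rfl, Matrix.mul_one]
    simp
  | succ k ih =>
    intro hk1
    have hk : k ≤ p := by omega
    have hkp : k < p := by omega
    have hXY : X (k+1) * Y (k+1) = lam (k+1) • 1 + Y k * X k := eq_add_of_sub_eq (hd2 k hkp)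
    rw [hXY, mul_add, trace_add]
    have hs : ((Qk X p h0 (k+1) * xprod X (k+1)) ^ j
          * (lam (k+1) • (1 : Matrix (Fin (α (k+1))) (Fin (α (k+1))) ℂ))).trace
        = lam (k+1) * (Bmat p h0 X ^ j).trace := by
      rw [Matrix.mul_smul, Matrix.mul_one, trace_smul,
          trace_pow_flip _ _ hj, PQ X p h0 (p - k) (k+1) (by omega), smul_eq_mul]
    have hy : ((Qk X p h0 (k+1) * xprod X (k+1)) ^ j * (Y k * X k)).trace
        = ((Qk X p h0 k * xprod X k) ^ j * (X k * Y k)).trace := by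
      rw [← Matrix.mul_assoc, Matrix.trace_mul_comm, ← Matrix.mul_assoc]
      have hsh : X k * (Qk X p h0 (k+1) * xprod X (k+1)) ^ j
          = (Qk X p h0 k * xprod X k) ^ j * X k := by
        rw [show xprod X (k+1) = xprod X k * X k from rfl,
            ← Matrix.mul_assoc (Qk X p h0 (k+1)) _ _,
            ← pow_shuttle, ← Matrix.mul_assoc, ← Qk_succ X p h0 hk]
      rw [hsh, Matrix.mul_assoc, Matrix.trace_mul_comm]
    rw [hs, hy, ih hk, Finset.sum_range_succ]
    ring

theorem main12 (lam : ℕ → ℂ) (v w : Fin (α 0) → ℂ)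
    (hd1 : X 0 * Y 0 - recast h0 (Y p * X p) + vecMulVec v w
      = lam 0 • (1 : Matrix (Fin (α 0)) (Fin (α 0)) ℂ))
    (hd2 : ∀ t : ℕ, t < p → X (t+1) * Y (t+1) - Y t * X t = lam (t+1) • 1)
    (j : ℕ) (hj : 1 ≤ j) :
    w ⬝ᵥ (Bmat p h0 X ^ j *ᵥ v)
      = (∑ t ∈ Finset.range (p + 1), lam t) * (Bmat p h0 X ^ j).trace := by
  have hvw : vecMulVec v w
      = lam 0 • (1 : Matrix (Fin (α 0)) (Fin (α 0)) ℂ)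
        + recast h0 (Y p * X p) - X 0 * Y 0 := by
    rw [← hd1]; abel
  rw [← trace_mul_vecMulVec (Bmat p h0 X ^ j) v w, hvw, mul_sub, mul_add, trace_sub, trace_add,
      Matrix.mul_smul, Matrix.mul_one, trace_smul, smul_eq_mul]
  have hQp : Qk X p h0 p = mcast rfl h0 (X p) := by
    rw [Qk_succ X p h0 le_rfl, Qk_top, mul_mcast, Matrix.mul_one]
  have hterm2 : (Bmat p h0 X ^ j * recast h0 (Y p * X p)).trace
      = ((Qk X p h0 p * xprod X p) ^ j * (X p * Y p)).trace := by
    have hr : recast h0 (Y p * X p) = mcast h0 rfl (Y p) * Qk X p h0 p := by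
      rw [hQp, mcast_mul h0 rfl rfl h0]
      rfl
    rw [hr, ← Matrix.mul_assoc, Matrix.trace_mul_comm, ← Matrix.mul_assoc]
    have hBj : Qk X p h0 p * Bmat p h0 X ^ j
        = (Qk X p h0 p * xprod X p) ^ j * Qk X p h0 p := by
      rw [← PQ X p h0 1 p (by omega), ← pow_shuttle]
    have hq : Qk X p h0 p * mcast h0 rfl (Y p) = X p * Y p := by
      rw [hQp, mcast_mul rfl h0 h0 rfl, mcast_id]
    rw [hBj, Matrix.mul_assoc, hq]
  rw [hterm2, u_formula X p h0 Y lam hd2 hj p le_rfl, Finset.sum_range_succ']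
  ring

/-- For a representation datum (`m = p + 1 ≥ 1`) and every `j ≥ 1`,
`w·B^j·v = (λ₀ + ⋯ + λ_{m−1})·Tr(B^j)`, where `B = X₀ X₁ ⋯ X_{m−1}`. -/
theorem statement12 (p : ℕ) (α : ℕ → ℕ) (lam : ℕ → ℂ) (h0 : α (p + 1) = α 0)
    (d : Datum α) (hd : IsRepDatum p lam h0 d) (j : ℕ) (hj : 1 ≤ j) :
    d.w ⬝ᵥ (Bmat p h0 d.X ^ j *ᵥ d.v)
      = (∑ t ∈ Finset.range (p + 1), lam t) * (Bmat p h0 d.X ^ j).trace := by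
  exact main12 d.X p h0 d.Y lam d.v d.w hd.1 (fun t ht => hd.2 t ht) j hj

end
end CM
end

section
/- Let m ≥ 3 and let (X_j, Y_j, v, w) be a representation datum. Then for all integers i ≥ 0 and k ≥ 2 with i + k < m, Tr(C_{i,k}) = Tr(C_{i+1,k}) + (λ_{m−i−1} + λ_{m−i−2} + ⋯ + λ_{m−i−k})·Tr(C_{i+1,k−1}), i.e. Tr(C_{i,k}) = Tr(C_{i+1,k}) + (∑_{s=i+1}^{i+k} λ_{m−s})·Tr(C_{i+1,k−1}). -/
open Matrix

namespace CM

noncomputable section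

variable {α : ℕ → ℕ}

/-- `C_{i,k}`: equal to `Y_{m−i−1} ⋯ Y_{m−i−k} · X_{m−i−k} ⋯ X_{m−i−1}` when `i + k < m`,
and to `Y_{m−i−1} ⋯ Y₀ · C_{i+k−m} · X₀ ⋯ X_{m−i−1}` when `i + k ≥ m` (here `m = p + 1`). -/
def Cik (p : ℕ) (h0 : α (p + 1) = α 0)
    (X : ∀ i : ℕ, Matrix (Fin (α i)) (Fin (α (i + 1))) ℂ)
    (Y : ∀ i : ℕ, Matrix (Fin (α (i + 1))) (Fin (α i)) ℂ) (i k : ℕ) :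
    Matrix (Fin (α (p + 1 - i))) (Fin (α (p + 1 - i))) ℂ :=
  if h : i + k < p + 1 then
    recast (congrArg α (by omega : p + 1 - i - k + k = p + 1 - i))
      (ysegFrom Y (p + 1 - i - k) k * xsegFrom X (p + 1 - i - k) k)
  else
    yprod Y (p + 1 - i) * Cmat p h0 X Y (i + k - (p + 1)) * xprod X (p + 1 - i)


section Toolkit

lemma trace_recast {a b : ℕ} (h : a = b) (M : Matrix (Fin a) (Fin a) ℂ) :
    (recast h M).trace = M.trace := by
  subst h
  have : recast rfl M = M := by ext i j; simp [recast]
  rw [this]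

lemma recast_mul_one {a b : ℕ} (h : a = b) :
    recast h ((1 : Matrix (Fin a) (Fin a) ℂ) * 1) = 1 := by
  subst h
  rw [Matrix.mul_one]
  ext i j
  simp [recast, Matrix.one_apply, Fin.ext_iff]

/-- Pad a rectangular matrix into the top-left corner of an `N × N` matrix. -/
def pad (N : ℕ) {a b : ℕ} (M : Matrix (Fin a) (Fin b) ℂ) : Matrix (Fin N) (Fin N) ℂ :=
  Matrix.of fun i j => if h : i.1 < a ∧ j.1 < b then M ⟨i.1, h.1⟩ ⟨j.1, h.2⟩ else 0

lemma pad_mul (N : ℕ) {a b c : ℕ} (hb : b ≤ N) (M : Matrix (Fin a) (Fin b) ℂ)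
    (M' : Matrix (Fin b) (Fin c) ℂ) : pad N (M * M') = pad N M * pad N M' := by
  ext i j
  by_cases hi : i.1 < a
  · by_cases hj : j.1 < c
    · have h1 : ∀ k : Fin N, pad N M i k * pad N M' k j
          = (fun n : ℕ => if h : n < b then M ⟨i.1, hi⟩ ⟨n, h⟩ * M' ⟨n, h⟩ ⟨j.1, hj⟩ else 0) k.1 := by
        intro k
        by_cases hk : k.1 < b <;> simp [pad, hi, hj, hk]
      rw [Matrix.mul_apply, Finset.sum_congr rfl (fun k _ => h1 k),
        Fin.sum_univ_eq_sum_range (fun n : ℕ => if h : n < b then M ⟨i.1, hi⟩ ⟨n, h⟩ * M' ⟨n, h⟩ ⟨j.1, hj⟩ else 0) N,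
        ← Finset.sum_subset (Finset.range_subset_range.mpr hb)
          (by intro x _ hx; rw [Finset.mem_range] at hx; simp [hx])]
      have h2 : ∀ n ∈ Finset.range b,
          (if h : n < b then M ⟨i.1, hi⟩ ⟨n, h⟩ * M' ⟨n, h⟩ ⟨j.1, hj⟩ else 0)
            = (fun n : ℕ => if h : n < b then M ⟨i.1, hi⟩ ⟨n, h⟩ * M' ⟨n, h⟩ ⟨j.1, hj⟩ else 0) n :=
        fun n _ => rfl
      rw [← Fin.sum_univ_eq_sum_range]
      simp [pad, hi, hj, Matrix.mul_apply]
    · simp [pad, hj, Matrix.mul_apply]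
  · simp [pad, hi, Matrix.mul_apply]

lemma trace_pad (N : ℕ) {a : ℕ} (M : Matrix (Fin a) (Fin a) ℂ) (ha : a ≤ N := by omega) :
    (pad N M).trace = M.trace := by
  have h1 : ∀ k : Fin N, pad N M k k
      = (fun n : ℕ => if h : n < a then M ⟨n, h⟩ ⟨n, h⟩ else 0) k.1 := by
    intro k; by_cases hk : k.1 < a <;> simp [pad, hk]
  unfold Matrix.trace Matrix.diag
  rw [Finset.sum_congr rfl (fun k _ => h1 k),
    Fin.sum_univ_eq_sum_range (fun n : ℕ => if h : n < a then M ⟨n, h⟩ ⟨n, h⟩ else 0) N,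
    ← Finset.sum_subset (Finset.range_subset_range.mpr ha)
      (by intro x _ hx; rw [Finset.mem_range] at hx; simp [hx]),
    ← Fin.sum_univ_eq_sum_range]
  simp

lemma pad_add (N : ℕ) {a b : ℕ} (M M' : Matrix (Fin a) (Fin b) ℂ) :
    pad N (M + M') = pad N M + pad N M' := by
  ext i j; by_cases h : i.1 < a ∧ j.1 < b <;> simp [pad, h]

lemma pad_smul (N : ℕ) {a b : ℕ} (z : ℂ) (M : Matrix (Fin a) (Fin b) ℂ) :
    pad N (z • M) = z • pad N M := by
  ext i j; by_cases h : i.1 < a ∧ j.1 < b <;> simp [pad, h]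


/-- padded `Y i`. -/
def py (N : ℕ) (Y : ∀ i : ℕ, Matrix (Fin (α (i + 1))) (Fin (α i)) ℂ) (i : ℕ) :
    Matrix (Fin N) (Fin N) ℂ := pad N (Y i)

/-- padded `X i`. -/
def px (N : ℕ) (X : ∀ i : ℕ, Matrix (Fin (α i)) (Fin (α (i + 1))) ℂ) (i : ℕ) :
    Matrix (Fin N) (Fin N) ℂ := pad N (X i)

/-- padded identity at vertex `t`. -/
def pe (α : ℕ → ℕ) (N t : ℕ) : Matrix (Fin N) (Fin N) ℂ :=
  pad N (1 : Matrix (Fin (α t)) (Fin (α t)) ℂ)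

/-- padded `ysegFrom`. -/
def pys (N : ℕ) (Y : ∀ i : ℕ, Matrix (Fin (α (i + 1))) (Fin (α i)) ℂ) (t r : ℕ) :
    Matrix (Fin N) (Fin N) ℂ := pad N (ysegFrom Y t r)

/-- padded `xsegFrom`. -/
def pxs (N : ℕ) (X : ∀ i : ℕ, Matrix (Fin (α i)) (Fin (α (i + 1))) ℂ) (t r : ℕ) :
    Matrix (Fin N) (Fin N) ℂ := pad N (xsegFrom X t r)

variable {N : ℕ} {X : ∀ i : ℕ, Matrix (Fin (α i)) (Fin (α (i + 1))) ℂ}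
  {Y : ∀ i : ℕ, Matrix (Fin (α (i + 1))) (Fin (α i)) ℂ}

lemma pys_zero (t : ℕ) : pys N Y t 0 = pe α N t := rfl

lemma pxs_zero (t : ℕ) : pxs N X t 0 = pe α N t := rfl

lemma pys_succ {t r : ℕ} (h : α (t + r) ≤ N) :
    pys N Y t (r + 1) = py N Y (t + r) * pys N Y t r := by
  unfold pys py
  rw [show ysegFrom Y t (r + 1) = Y (t + r) * ysegFrom Y t r from rfl, pad_mul N h]

lemma pxs_succ {t r : ℕ} (h : α (t + r) ≤ N) :
    pxs N X t (r + 1) = pxs N X t r * px N X (t + r) := by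
  unfold pxs px
  rw [show xsegFrom X t (r + 1) = xsegFrom X t r * X (t + r) from rfl, pad_mul N h]

lemma py_mul_pe {t : ℕ} (h : α t ≤ N) : py N Y t * pe α N t = py N Y t := by
  unfold py pe; rw [← pad_mul N h, Matrix.mul_one]

lemma pe_mul_py {t : ℕ} (h : α (t + 1) ≤ N) : pe α N (t + 1) * py N Y t = py N Y t := by
  unfold py pe; rw [← pad_mul N h, Matrix.one_mul]

lemma pe_mul_px {t : ℕ} (h : α t ≤ N) : pe α N t * px N X t = px N X t := by
  unfold px pe; rw [← pad_mul N h, Matrix.one_mul]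

lemma px_mul_pe {t : ℕ} (h : α (t + 1) ≤ N) : px N X t * pe α N (t + 1) = px N X t := by
  unfold px pe; rw [← pad_mul N h, Matrix.mul_one]

lemma pxs_mul_pe {t r : ℕ} (h : α (t + r) ≤ N) :
    pxs N X t r * pe α N (t + r) = pxs N X t r := by
  unfold pxs pe; rw [← pad_mul N h, Matrix.mul_one]

lemma pe_mul_pys {t r : ℕ} (h : α (t + r) ≤ N) :
    pe α N (t + r) * pys N Y t r = pys N Y t r := by
  unfold pys pe; rw [← pad_mul N h, Matrix.one_mul]

lemma pys_front : ∀ r t : ℕ, (∀ s, s ≤ t + r + 1 → α s ≤ N) →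
    pys N Y t (r + 1) = pys N Y (t + 1) r * py N Y t
  | 0, t, hb => by
    rw [pys_succ (hb _ (by omega)), pys_zero, pys_zero, Nat.add_zero,
      py_mul_pe (hb _ (by omega)), pe_mul_py (hb _ (by omega))]
  | r + 1, t, hb => by
    rw [pys_succ (hb _ (by omega)), pys_front r t (fun s hs => hb s (by omega)),
      pys_succ (Y := Y) (t := t + 1) (r := r) (hb _ (by omega)),
      show t + (r + 1) = t + 1 + r by omega, Matrix.mul_assoc]

lemma pxs_front : ∀ r t : ℕ, (∀ s, s ≤ t + r + 1 → α s ≤ N) →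
    pxs N X t (r + 1) = px N X t * pxs N X (t + 1) r
  | 0, t, hb => by
    rw [pxs_succ (hb _ (by omega)), pxs_zero, pxs_zero, Nat.add_zero,
      pe_mul_px (hb _ (by omega)), px_mul_pe (hb _ (by omega))]
  | r + 1, t, hb => by
    rw [pxs_succ (hb _ (by omega)), pxs_front r t (fun s hs => hb s (by omega)),
      pxs_succ (X := X) (t := t + 1) (r := r) (hb _ (by omega)),
      show t + (r + 1) = t + 1 + r by omega, Matrix.mul_assoc]

lemma pad_yprod : ∀ k : ℕ, (∀ s, s ≤ k → α s ≤ N) →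
    pad N (yprod Y k) = pys N Y 0 k
  | 0, _ => rfl
  | k + 1, hb => by
    rw [show yprod Y (k + 1) = Y k * yprod Y k from rfl, pad_mul N (hb _ (by omega)),
      pad_yprod k (fun s hs => hb s (by omega)), pys_succ (hb _ (by omega)),
      Nat.zero_add]
    rfl

lemma pad_xprod : ∀ k : ℕ, (∀ s, s ≤ k → α s ≤ N) →
    pad N (xprod X k) = pxs N X 0 k
  | 0, _ => rfl
  | k + 1, hb => by
    rw [show xprod X (k + 1) = xprod X k * X k from rfl, pad_mul N (hb _ (by omega)),
      pad_xprod k (fun s hs => hb s (by omega)), pxs_succ (hb _ (by omega)),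
      Nat.zero_add]
    rfl

/-- trace of a segment product, in padded form. -/
lemma trace_seg (t r : ℕ) (hb : α t ≤ N) (ht : α (t + r) ≤ N) :
    (ysegFrom Y t r * xsegFrom X t r).trace = (pys N Y t r * pxs N X t r).trace := by
  unfold pys pxs
  rw [← pad_mul N hb, trace_pad N _ ht]

lemma hrelM (p : ℕ) (lam : ℕ → ℂ)
    (hrel : ∀ j, j < p → px N X (j + 1) * py N Y (j + 1)
      = lam (j + 1) • pe α N (j + 1) + py N Y j * px N X j)
    (j : ℕ) (hj : j < p) (M : Matrix (Fin N) (Fin N) ℂ) :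
    px N X (j + 1) * (py N Y (j + 1) * M)
      = lam (j + 1) • (pe α N (j + 1) * M) + py N Y j * (px N X j * M) := by
  rw [← Matrix.mul_assoc, hrel j hj, Matrix.add_mul, Matrix.smul_mul, Matrix.mul_assoc]

lemma keyLc (p : ℕ) (lam : ℕ → ℂ)
    (hN : ∀ s, s ≤ p + 1 → α s ≤ N)
    (hrel : ∀ j, j < p → px N X (j + 1) * py N Y (j + 1)
      = lam (j + 1) • pe α N (j + 1) + py N Y j * px N X j) :
    ∀ l a' : ℕ, a' + l + 1 ≤ p → ∀ U : Matrix (Fin N) (Fin N) ℂ,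
    (pys N Y (a' + 1) (l + 1) * (pxs N X (a' + 1) (l + 1)
        * (py N Y (a' + 1 + l) * (px N X (a' + 1 + l) * U)))).trace
      = (py N Y a' * (px N X a' * (pxs N X (a' + 1) (l + 1)
            * (U * pys N Y (a' + 1) (l + 1))))).trace
        + (∑ t ∈ Finset.Icc (a' + 1) (a' + 1 + l), lam t)
            * (pys N Y (a' + 1) (l + 1) * (pxs N X (a' + 1) (l + 1) * U)).trace
  | 0, a', hb, U => by
    simp only [Nat.add_zero]
    simp only [pys_succ (t := a' + 1) (r := 0) (hN _ (by omega)),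
      pxs_succ (t := a' + 1) (r := 0) (hN _ (by omega))]
    simp only [Nat.add_zero, pys_zero, pxs_zero]
    simp only [py_mul_pe (t := a' + 1) (hN _ (by omega)),
      pe_mul_px (t := a' + 1) (hN _ (by omega))]
    try simp only [Matrix.mul_assoc]
    rw [hrelM p lam hrel a' (by omega)]
    have habs : pe α N (a' + 1) * (px N X (a' + 1) * U) = px N X (a' + 1) * U := by
      rw [← Matrix.mul_assoc, pe_mul_px (hN _ (by omega))]
    rw [habs]
    simp only [Matrix.mul_add, Matrix.mul_smul, Matrix.trace_add, Matrix.trace_smul,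
      smul_eq_mul, Finset.Icc_self, Finset.sum_singleton]
    rw [Matrix.trace_mul_comm (py N Y (a' + 1)), Matrix.trace_mul_comm (py N Y (a' + 1))]
    try simp only [Matrix.mul_assoc]
    ring
  | l + 1, a', hb, U => by
    have ih := keyLc p lam hN hrel l a' (by omega)
    have e1 : a' + 1 + (l + 1) = a' + 1 + l + 1 := by omega
    simp only [pys_succ (t := a' + 1) (r := l + 1) (hN _ (by omega)),
      pxs_succ (t := a' + 1) (r := l + 1) (hN _ (by omega)), e1]
    try simp only [Matrix.mul_assoc]
    rw [hrelM p lam hrel (a' + 1 + l) (by omega)]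
    have habs : pe α N (a' + 1 + l + 1) * (px N X (a' + 1 + l + 1) * U)
        = px N X (a' + 1 + l + 1) * U := by
      rw [← Matrix.mul_assoc, pe_mul_px (hN _ (by omega))]
    rw [habs]
    simp only [Matrix.mul_add, Matrix.mul_smul, Matrix.trace_add, Matrix.trace_smul,
      smul_eq_mul]
    rw [Matrix.trace_mul_comm (py N Y (a' + 1 + l + 1)),
      Matrix.trace_mul_comm (py N Y (a' + 1 + l + 1))]
    try simp only [Matrix.mul_assoc]
    rw [ih]
    try simp only [Matrix.mul_assoc]
    have hQ : (py N Y (a' + 1 + l + 1) * (pys N Y (a' + 1) (l + 1)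
          * (pxs N X (a' + 1) (l + 1) * (px N X (a' + 1 + l + 1) * U)))).trace
        = (pys N Y (a' + 1) (l + 1) * (pxs N X (a' + 1) (l + 1)
            * (px N X (a' + 1 + l + 1) * (U * py N Y (a' + 1 + l + 1))))).trace := by
      rw [Matrix.trace_mul_comm (py N Y (a' + 1 + l + 1))]
      try simp only [Matrix.mul_assoc]
    rw [← hQ]
    rw [Finset.sum_Icc_succ_top (by omega : a' + 1 ≤ a' + 1 + l + 1)]
    ring

end Toolkit

/-- For a representation datum with `m = p + 1 ≥ 3`, and all `i ≥ 0`,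
`k ≥ 2` with `i + k < m`,
`Tr(C_{i,k}) = Tr(C_{i+1,k}) + (λ_{m−i−1} + ⋯ + λ_{m−i−k})·Tr(C_{i+1,k−1})`. -/
theorem statement16 (p : ℕ) (hp : 2 ≤ p) (α : ℕ → ℕ) (lam : ℕ → ℂ) (h0 : α (p + 1) = α 0)
    (d : Datum α) (hd : IsRepDatum p lam h0 d) (i k : ℕ) (hk : 2 ≤ k) (hik : i + k < p + 1) :
    (Cik p h0 d.X d.Y i k).trace
      = (Cik p h0 d.X d.Y (i + 1) k).trace
        + (∑ s ∈ Finset.Icc (i + 1) (i + k), lam (p + 1 - s))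
            * (Cik p h0 d.X d.Y (i + 1) (k - 1)).trace := by
  obtain ⟨l, rfl⟩ : ∃ l, k = l + 2 := ⟨k - 2, by omega⟩
  set N := (Finset.range (p + 2)).sup α with hN0
  have hN : ∀ s, s ≤ p + 1 → α s ≤ N :=
    fun s hs => Finset.le_sup (Finset.mem_range.mpr (by omega))
  set A := p - i - l - 2 with hAdef
  -- collapsed relation
  have hrel : ∀ j, j < p → px N d.X (j + 1) * py N d.Y (j + 1)
      = lam (j + 1) • pe α N (j + 1) + py N d.Y j * px N d.X j := by
    intro j hj
    have h3 : d.X (j + 1) * d.Y (j + 1)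
        = lam (j + 1) • (1 : Matrix (Fin (α (j + 1))) (Fin (α (j + 1))) ℂ)
          + d.Y j * d.X j := sub_eq_iff_eq_add.mp (hd.2 j hj)
    unfold px py pe
    rw [← pad_mul N (show α (j + 1 + 1) ≤ N from hN _ (by omega)),
      ← pad_mul N (show α j ≤ N from hN _ (by omega)), h3, pad_add, pad_smul]
  -- bridge for C_{i,k}
  have hb1 : (Cik p h0 d.X d.Y i (l + 2)).trace
      = (pys N d.Y (A + 1) (l + 2) * pxs N d.X (A + 1) (l + 2)).trace := by
    unfold Cik
    rw [dif_pos hik, trace_recast,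
      trace_seg _ _ (hN _ (by omega)) (hN _ (by omega)),
      show p + 1 - i - (l + 2) = A + 1 by omega]
  -- bridge for C_{i+1,k-1}
  have hb2 : (Cik p h0 d.X d.Y (i + 1) (l + 2 - 1)).trace
      = (pys N d.Y (A + 1) (l + 1) * pxs N d.X (A + 1) (l + 1)).trace := by
    rw [show l + 2 - 1 = l + 1 from rfl]
    unfold Cik
    rw [dif_pos (by omega), trace_recast,
      trace_seg _ _ (hN _ (by omega)) (hN _ (by omega)),
      show p + 1 - (i + 1) - (l + 1) = A + 1 by omega]
  -- bridge for C_{i+1,k}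
  have hb3 : (Cik p h0 d.X d.Y (i + 1) (l + 2)).trace
      = (pys N d.Y A (l + 2) * pxs N d.X A (l + 2)).trace := by
    by_cases hc : (i + 1) + (l + 2) < p + 1
    · unfold Cik
      rw [dif_pos hc, trace_recast,
        trace_seg _ _ (hN _ (by omega)) (hN _ (by omega)),
        show p + 1 - (i + 1) - (l + 2) = A by omega]
    · have hA0 : A = 0 := by omega
      unfold Cik
      rw [dif_neg hc, show (i + 1) + (l + 2) - (p + 1) = 0 by omega]
      have hCm : Cmat p h0 d.X d.Y 0 = 1 := by
        unfold Cmat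
        rw [dif_pos (by omega : (0:ℕ) ≤ p + 1)]
        exact recast_mul_one _
      rw [hCm, Matrix.mul_one, show p + 1 - (i + 1) = l + 2 by omega,
        ← trace_pad N (yprod d.Y (l + 2) * xprod d.X (l + 2)) (hN _ (by omega)),
        pad_mul N (hN 0 (by omega)),
        pad_yprod _ (fun s hs => hN s (by omega)),
        pad_xprod _ (fun s hs => hN s (by omega)), hA0]
  -- sum conversion
  have hsum : (∑ s ∈ Finset.Icc (i + 1) (i + (l + 2)), lam (p + 1 - s))
      = (∑ t ∈ Finset.Icc (A + 1) (A + 1 + l), lam t) + lam (A + 1 + l + 1) := by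
    rw [← Finset.sum_Icc_succ_top (by omega : A + 1 ≤ A + 1 + l + 1)]
    apply Finset.sum_nbij' (i := fun s => p + 1 - s) (j := fun t => p + 1 - t) <;>
      intro a ha <;> (try simp only [Finset.mem_Icc] at ha ⊢) <;>
      first
        | rfl
        | omega
  -- key telescoping instance
  have hkey := keyLc (N := N) (X := d.X) (Y := d.Y) p lam hN hrel l A (by omega) 1
  simp only [Matrix.mul_one, Matrix.one_mul] at hkey
  rw [Matrix.trace_mul_comm (pys N d.Y (A + 1) (l + 1))] at hkey
  simp only [Matrix.mul_assoc] at hkey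
  -- part (a): split the top of C_{i,k}
  have ha : (pys N d.Y (A + 1) (l + 2) * pxs N d.X (A + 1) (l + 2)).trace
      = (pxs N d.X (A + 1) (l + 1) * (py N d.Y (A + 1 + l)
            * (px N d.X (A + 1 + l) * pys N d.Y (A + 1) (l + 1)))).trace
        + lam (A + 1 + l + 1)
            * (pxs N d.X (A + 1) (l + 1) * pys N d.Y (A + 1) (l + 1)).trace := by
    rw [pys_succ (hN _ (by omega)), pxs_succ (hN _ (by omega)),
      show A + 1 + (l + 1) = A + 1 + l + 1 by omega]
    rw [Matrix.trace_mul_comm (py N d.Y (A + 1 + l + 1) * pys N d.Y (A + 1) (l + 1))]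
    simp only [Matrix.mul_assoc]
    rw [hrelM p lam hrel (A + 1 + l) (by omega)]
    have habs2 : pe α N (A + 1 + l + 1) * pys N d.Y (A + 1) (l + 1)
        = pys N d.Y (A + 1) (l + 1) := by
      rw [show A + 1 + l + 1 = A + 1 + (l + 1) by omega]
      exact pe_mul_pys (hN _ (by omega))
    rw [habs2]
    simp only [Matrix.mul_add, Matrix.mul_smul, Matrix.trace_add, Matrix.trace_smul,
      smul_eq_mul]
    ring
  -- part (b): front-split of C_{i+1,k}
  have hbf : (pys N d.Y A (l + 2) * pxs N d.X A (l + 2)).trace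
      = (py N d.Y A * (px N d.X A
          * (pxs N d.X (A + 1) (l + 1) * pys N d.Y (A + 1) (l + 1)))).trace := by
    rw [pys_front (l + 1) A (fun s hs => hN s (by omega)),
      pxs_front (l + 1) A (fun s hs => hN s (by omega))]
    simp only [Matrix.mul_assoc]
    rw [Matrix.trace_mul_comm (pys N d.Y (A + 1) (l + 1))]
    simp only [Matrix.mul_assoc]
  have hcyc : (pxs N d.X (A + 1) (l + 1) * pys N d.Y (A + 1) (l + 1)).trace
      = (pys N d.Y (A + 1) (l + 1) * pxs N d.X (A + 1) (l + 1)).trace :=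
    Matrix.trace_mul_comm _ _
  rw [hcyc] at ha
  rw [hb1, hb2, hb3, hsum, ha, hbf, hkey]
  ring

end
end CM
end

section
/- Let m ≥ 3 and let α = (α₀, α₁, …, α_{m−1}) ∈ ℕ^m satisfy ∑_{i∈ℤ/m} (α_i − α_{i+1})² ≤ 2α₀ (the sum of squared differences of cyclically consecutive entries, computed in ℤ). Let k ∈ {0, 1, …, m−1} be the smallest index at which α attains its maximum, i.e. α_k = max_j α_j and α_t < α_k for all t < k. Then: if k ≥ 1, one has α_k ≤ α_{k−1} + α_{k+1} (indices mod m); and if k = 0, one has α₀ ≤ α₁ + α_{m−1} + 1. -/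
lemma two_terms {n : ℕ} [NeZero n] (f : ZMod n → ℤ) (hf : ∀ i, 0 ≤ f i)
    {i j : ZMod n} (hij : i ≠ j) : f i + f j ≤ ∑ x : ZMod n, f x := by
  have := Finset.sum_le_sum_of_subset_of_nonneg
    (Finset.subset_univ ({i, j} : Finset (ZMod n))) (fun x _ _ => hf x)
  rwa [Finset.sum_pair hij] at this

/-- Let `m = m' + 3 ≥ 3` and let `α ∈ ℕ^m` (indexed by `ℤ/m`) satisfy
`∑_{i ∈ ℤ/m} (α_i − α_{i+1})² ≤ 2·α₀`.  Let `k` be the smallest index at which `α` attains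
its maximum.  Then `α_k ≤ α_{k−1} + α_{k+1}` if `k ≥ 1`, and `α₀ ≤ α₁ + α_{m−1} + 1` if
`k = 0`. -/
theorem statement17 (m' : ℕ) (α : ZMod (m' + 3) → ℕ)
    (hdim : ∑ i : ZMod (m' + 3), ((α i : ℤ) - (α (i + 1) : ℤ)) ^ 2 ≤ 2 * (α 0 : ℤ))
    (k : ℕ) (hk : k < m' + 3)
    (hmax : ∀ j : ZMod (m' + 3), α j ≤ α (k : ZMod (m' + 3)))
    (hfirst : ∀ t : ℕ, t < k → α (t : ZMod (m' + 3)) < α (k : ZMod (m' + 3))) :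
    (1 ≤ k → α (k : ZMod (m' + 3)) ≤ α ((k : ZMod (m' + 3)) - 1) + α ((k : ZMod (m' + 3)) + 1)) ∧
    (k = 0 → α 0 ≤ α 1 + α (-1) + 1) := by
  haveI : Fact (1 < m' + 3) := ⟨by omega⟩
  have hone : (1 : ZMod (m' + 3)) ≠ 0 := one_ne_zero
  set K : ZMod (m' + 3) := (k : ZMod (m' + 3)) with hK
  constructor
  · intro hk1
    by_contra h
    push_neg at h
    have hne : K - 1 ≠ K := by
      intro he
      exact hone (by linear_combination K - he)
    have hsum := two_terms (fun i => ((α i : ℤ) - (α (i + 1) : ℤ)) ^ 2)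
      (fun i => sq_nonneg _) hne
    simp only [sub_add_cancel] at hsum
    have hsum2 : ((α (K - 1) : ℤ) - α K) ^ 2 + ((α K : ℤ) - α (K + 1)) ^ 2 ≤ 2 * (α 0 : ℤ) :=
      le_trans hsum hdim
    have hcast : ((k - 1 : ℕ) : ZMod (m' + 3)) = K - 1 := by
      have h1 : k - 1 + 1 = k := by omega
      have h2 : ((k - 1 : ℕ) : ZMod (m' + 3)) + 1 = K := by
        rw [hK, ← h1]; push_cast; ring
      exact eq_sub_of_add_eq h2
    have hlt : α (K - 1) < α K := hcast ▸ hfirst (k - 1) (by omega)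
    have h0 : α (0 : ZMod (m' + 3)) < α K := by
      have := hfirst 0 (by omega)
      simpa using this
    have hm : α (K + 1) ≤ α K := hmax (K + 1)
    have hltz : (α (K - 1) : ℤ) < α K := by exact_mod_cast hlt
    have h0z : (α 0 : ℤ) < α K := by exact_mod_cast h0
    have hmz : (α (K + 1) : ℤ) ≤ α K := by exact_mod_cast hm
    have hz : (α (K - 1) : ℤ) + α (K + 1) < α K := by exact_mod_cast h
    nlinarith [sq_nonneg ((α (K - 1) : ℤ) - α (K + 1)), sq_nonneg ((α K : ℤ) - 1),
      sq_nonneg ((α K : ℤ) + 1)]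
  · intro hk0
    by_contra h
    push_neg at h
    have hne : (-1 : ZMod (m' + 3)) ≠ 0 := by
      intro he
      exact hone (by linear_combination -he)
    have hsum := two_terms (fun i => ((α i : ℤ) - (α (i + 1) : ℤ)) ^ 2)
      (fun i => sq_nonneg _) hne
    simp only [neg_add_cancel] at hsum
    have hsum2 : ((α (-1) : ℤ) - α 0) ^ 2 + ((α 0 : ℤ) - α 1) ^ 2 ≤ 2 * (α 0 : ℤ) :=
      le_trans hsum hdim
    have h' : (α 1 : ℤ) + α (-1) + 1 < α 0 := by exact_mod_cast h
    nlinarith [sq_nonneg ((α (-1) : ℤ) - α 1), sq_nonneg ((α 0 : ℤ) + 1), sq_nonneg ((α 0 : ℤ))]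
end
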